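/- arXiv:2407.00883 — 4 statements merged into one kernel-verified Lean document; each statement's English description precedes it below -/
import Mathlib

section
/- Let Σ = (Γ, σ) be a signed graph, let λ ≥ μ ≥ 0 be integers, let C be any (λ, μ)-colour set, and let δ ∈ {0,1} be congruent to λ−μ modulo 2 (with the convention 0^0 = 1). Then the number of proper C-colourings of Σ equals Σ_{Y ⊆ E(Γ)} (−1)^{|Y|} · λ^{p(Σ|Y)} · (λ−μ)^{b(Σ|Y) − p(Σ|Y)} · δ^{c(Σ|Y) − b(Σ|Y)}. In particular this count is independent of the choice of (λ, μ)-colour set C. -/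
open Finset

namespace SignedPaper

/-- The set of proper `C`-colourings of the signed graph `(G, σ)`:
functions `κ : V → C` with `κ v ≠ σ{v,w} * κ w` on every edge. -/
def ProperColourings {V : Type*} (G : SimpleGraph V) (σ : Sym2 V → ℤ) (C : Finset ℤ) :
    Set (V → ℤ) :=
  {κ | (∀ v, κ v ∈ C) ∧ ∀ v w, G.Adj v w → κ v ≠ σ s(v, w) * κ w}

/-- The number of proper `C`-colourings of the signed graph `(G, σ)`. -/
noncomputable def properCount {V : Type*} (G : SimpleGraph V) (σ : Sym2 V → ℤ)
    (C : Finset ℤ) : ℕ :=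
  (ProperColourings G σ C).ncard

/-- The `λ`-colour set `C_λ`. -/
noncomputable def colourSet (lam : ℕ) : Finset ℤ :=
  if Even lam then (Finset.Icc (-((lam : ℤ) / 2)) ((lam : ℤ) / 2)).erase 0
  else Finset.Icc (-((lam : ℤ) / 2)) ((lam : ℤ) / 2)

/-- `f(Σ, λ)`: the number of proper `C_λ`-colourings. -/
noncomputable def signedCount {V : Type*} (G : SimpleGraph V) (σ : Sym2 V → ℤ) (lam : ℕ) : ℕ :=
  properCount G σ (colourSet lam)

/-- The spanning subgraph `Σ|Y` of `G` with edge set `Y`. -/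
def restrict {V : Type*} (G : SimpleGraph V) (Y : Finset (Sym2 V)) : SimpleGraph V where
  Adj v w := G.Adj v w ∧ s(v, w) ∈ Y
  symm := ⟨fun v w h => ⟨h.1.symm, by rw [Sym2.eq_swap]; exact h.2⟩⟩
  loopless := ⟨fun v h => G.loopless.irrefl v h.1⟩

/-- A signed graph is balanced if every cycle has sign product `1`
(equivalently, for `±1` signatures, an even number of negative edges). -/
def IsBalanced {V : Type*} (G : SimpleGraph V) (σ : Sym2 V → ℤ) : Prop :=
  ∀ (v : V) (w : G.Walk v v), w.IsCycle → (w.edges.map σ).prod = 1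

/-- `c(Σ)`: the number of connected components. -/
noncomputable def numComponents {V : Type*} (G : SimpleGraph V) : ℕ :=
  Nat.card G.ConnectedComponent

/-- `b(Σ)`: the number of balanced connected components. -/
noncomputable def numBalancedComponents {V : Type*} (G : SimpleGraph V) (σ : Sym2 V → ℤ) : ℕ :=
  Nat.card {c : G.ConnectedComponent //
    ∀ v : V, G.connectedComponentMk v = c →
      ∀ w : G.Walk v v, w.IsCycle → (w.edges.map σ).prod = 1}

/-- `p(Σ)`: the number of connected components all of whose edges are positive. -/
noncomputable def numPositiveComponents {V : Type*} (G : SimpleGraph V) (σ : Sym2 V → ℤ) : ℕ :=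
  Nat.card {c : G.ConnectedComponent //
    ∀ v w : V, G.Adj v w → G.connectedComponentMk v = c → σ s(v, w) = 1}

/-- `(G₁, σ₁)` is switching isomorphic to `(G₂, σ₂)`: some sign-preserving isomorphism
onto a switching of `(G₂, σ₂)`. -/
def SwitchIso {V₁ V₂ : Type*} (G₁ : SimpleGraph V₁) (σ₁ : Sym2 V₁ → ℤ)
    (G₂ : SimpleGraph V₂) (σ₂ : Sym2 V₂ → ℤ) : Prop :=
  ∃ (e : G₁ ≃g G₂) (X : V₂ → Bool), ∀ v w : V₁, G₁.Adj v w →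
    σ₁ s(v, w) = (if X (e v) = X (e w) then 1 else -1) * σ₂ s(e v, e w)

end SignedPaper
namespace SignedPaper

/-- Falling factorial `(x)_n = x(x-1)⋯(x-n+1)`. -/
def fallFac (x : ℤ) (n : ℕ) : ℤ := ∏ j ∈ Finset.range n, (x - j)

/-- `₂(x)_n = x(x-2)(x-4)⋯(x-2(n-1))`. -/
def fallFac2 (x : ℤ) (n : ℕ) : ℤ := ∏ j ∈ Finset.range n, (x - 2 * j)

/-- Stirling number of the second kind `S(n,k)`: the number of partitions of an
`n`-element set into `k` nonempty blocks. -/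
noncomputable def stirling2 (n k : ℕ) : ℕ :=
  Nat.card {p : Finpartition (Finset.univ : Finset (Fin n)) // p.parts.card = k}

/-- `T(n,k) = (n)_{2k} / (2^k k!)`, the number of matchings of size `k` in `K_n`. -/
def matchNum (n k : ℕ) : ℕ := n.descFactorial (2 * k) / (2 ^ k * k.factorial)

/-- `H(n, x)`. -/
noncomputable def H (n : ℤ) (x : ℤ) : ℤ :=
  if n < 0 then 0
  else ∑ i ∈ Finset.range (n.toNat + 1), (stirling2 n.toNat i : ℤ) * fallFac2 x i

/-- `H₁(l, m, n, x)`. -/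
noncomputable def H1 (l m n : ℤ) (x : ℤ) : ℤ :=
  if l < 0 ∨ m < 0 ∨ n < 0 then 0
  else ∑ i ∈ Finset.range (l.toNat + 1), ∑ j ∈ Finset.range (n.toNat + 1),
    ∑ k ∈ Finset.range (min i j + 1),
      (k.factorial : ℤ) * (i.choose k : ℤ) * (j.choose k : ℤ) *
        (stirling2 l.toNat i : ℤ) * (stirling2 n.toNat j : ℤ) *
        fallFac2 x (i + j - k) * fallFac (x - i - j) m.toNat

/-- `H₂(l, m, n, x)`. -/
noncomputable def H2 (l m n : ℤ) (x : ℤ) : ℤ :=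
  if l < 0 ∨ m < 0 ∨ n < 0 then 0
  else ∑ i ∈ Finset.range (l.toNat + 1), ∑ j ∈ Finset.range (m.toNat + 1),
    ∑ k ∈ Finset.range (n.toNat + 1), ∑ s ∈ Finset.range (min i j + 1),
      ∑ t ∈ Finset.range (k + 1),
        (s.factorial : ℤ) * (i.choose s : ℤ) * (j.choose s : ℤ) * (k.choose t : ℤ) *
          (stirling2 l.toNat i : ℤ) * (stirling2 m.toNat j : ℤ) * (stirling2 n.toNat k : ℤ) *
          fallFac2 x (i + j + k - t - s) * fallFac ((i : ℤ) + j - 2 * s) t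

/-- `H₃(l, m, n, x)`. -/
noncomputable def H3 (l m n : ℤ) (x : ℤ) : ℤ :=
  if l < 0 ∨ m < 0 ∨ n < 0 then 0
  else ∑ i ∈ Finset.range (min l.toNat m.toNat + 1),
    ∑ j ∈ Finset.range ((l.toNat - i) / 2 + 1), ∑ k ∈ Finset.range ((m.toNat - i) / 2 + 1),
      (i.factorial : ℤ) * (l.toNat.choose i : ℤ) * (m.toNat.choose i : ℤ) *
        (matchNum (l.toNat - i) j : ℤ) * (matchNum (m.toNat - i) k : ℤ) *
        fallFac2 x (l.toNat + m.toNat - i - j - k) * fallFac (x - l - m + i) n.toNat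

/-- `H₄(l, m, n, x)`. -/
noncomputable def H4 (l m n : ℤ) (x : ℤ) : ℤ :=
  if l < 0 ∨ m < 0 ∨ n < 0 then 0
  else ∑ i ∈ Finset.range (min l.toNat m.toNat + 1),
    ∑ j ∈ Finset.range ((l.toNat - i) / 2 + 1), ∑ k ∈ Finset.range ((m.toNat - i) / 2 + 1),
      ∑ s ∈ Finset.range (n.toNat + 1), ∑ t ∈ Finset.range (s + 1),
        (i.factorial : ℤ) * (l.toNat.choose i : ℤ) * (m.toNat.choose i : ℤ) *
          (s.choose t : ℤ) * (stirling2 n.toNat s : ℤ) *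
          (matchNum (l.toNat - i) j : ℤ) * (matchNum (m.toNat - i) k : ℤ) *
          fallFac2 x (l.toNat + m.toNat + s - i - j - k - t) *
          fallFac ((l : ℤ) + m - i - 2 * j - 2 * k) t

/-- A `(λ, μ)`-colour set with paired part `P` and unpaired part `U`. -/
def IsColourSet (lam mu : ℕ) (C : Finset ℤ) : Prop :=
  ∃ P U : Finset ℤ,
    (0 : ℤ) ∉ P ∧ (0 : ℤ) ∉ U ∧ Disjoint P U ∧
    (∀ x ∈ P, -x ∈ P) ∧ U.card = mu ∧ (∀ x ∈ U, -x ∉ U) ∧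
    ((Even (lam - mu) ∧ P.card = lam - mu ∧ C = P ∪ U) ∨
     (¬ Even (lam - mu) ∧ P.card = lam - mu - 1 ∧ C = P ∪ U ∪ {0}))

end SignedPaper


namespace SignedAux

open Finset SimpleGraph

variable {V : Type*} {H : SimpleGraph V} {σ : Sym2 V → ℤ}

def wS (σ : Sym2 V → ℤ) {a b : V} (p : H.Walk a b) : ℤ := (p.edges.map σ).prod

@[simp] lemma wS_nil {a : V} : wS σ (Walk.nil : H.Walk a a) = 1 := by simp [wS]
@[simp] lemma wS_cons {a b c : V} (h : H.Adj a b) (p : H.Walk b c) :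
    wS σ (Walk.cons h p) = σ s(a, b) * wS σ p := by simp [wS]
@[simp] lemma wS_append {a b c : V} (p : H.Walk a b) (q : H.Walk b c) :
    wS σ (p.append q) = wS σ p * wS σ q := by simp [wS]
@[simp] lemma wS_reverse {a b : V} (p : H.Walk a b) : wS σ p.reverse = wS σ p := by
  simp [wS, Walk.edges_reverse, List.prod_reverse]

lemma list_prod_pm {l : List ℤ} (h : ∀ x ∈ l, x = 1 ∨ x = -1) : l.prod = 1 ∨ l.prod = -1 := by
  induction l with
  | nil => simp
  | cons a t ih =>
      rcases h a (by simp) with h1 | h1 <;>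
      rcases ih (fun x hx => h x (by simp [hx])) with h2 | h2 <;>
      simp [h1, h2]

lemma wS_pm (hσ : ∀ e ∈ H.edgeSet, σ e = 1 ∨ σ e = -1) {a b : V} (p : H.Walk a b) :
    wS σ p = 1 ∨ wS σ p = -1 := by
  apply list_prod_pm
  intro x hx
  obtain ⟨e, he, rfl⟩ := List.mem_map.mp hx
  exact hσ e (p.edges_subset_edgeSet he)

lemma wS_sq (hσ : ∀ e ∈ H.edgeSet, σ e = 1 ∨ σ e = -1) {a b : V} (p : H.Walk a b) :
    wS σ p * wS σ p = 1 := by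
  rcases wS_pm hσ p with h | h <;> rw [h] <;> ring

lemma path_loop_nil {v : V} (p : H.Walk v v) (hp : p.IsPath) : p = Walk.nil := by
  cases p with
  | nil => rfl
  | cons h q =>
      exfalso
      have := hp.support_nodup
      rw [Walk.support_cons] at this
      exact (List.nodup_cons.mp this).1 q.end_mem_support

lemma two_cycle (hσ : ∀ e ∈ H.edgeSet, σ e = 1 ∨ σ e = -1) {a b : V} (h : H.Adj a b) :
    σ s(a, b) * (σ s(b, a) * 1) = 1 := by
  rw [mul_one, show s(b, a) = s(a, b) from Sym2.eq_swap]
  rcases hσ s(a, b) (H.mem_edgeSet.mpr h) with h1 | h1 <;> rw [h1] <;> ring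

lemma closed_walk_sign (hσ : ∀ e ∈ H.edgeSet, σ e = 1 ∨ σ e = -1)
    (c : H.ConnectedComponent)
    (hb : ∀ v, H.connectedComponentMk v = c → ∀ w : H.Walk v v, w.IsCycle → wS σ w = 1) :
    ∀ (n : ℕ) (v : V), H.connectedComponentMk v = c → ∀ p : H.Walk v v, p.length = n →
      wS σ p = 1 := by
  intro n
  induction n using Nat.strong_induction_on with
  | _ n IH =>
  intro v hv p hn
  classical
  by_cases hnd : p.support.tail.Nodup
  · cases p with
    | nil => simp
    | cons h q =>
        rename_i u
        have hq : q.IsPath := by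
          rw [Walk.isPath_def]
          simpa using hnd
        by_cases he : s(v, u) ∈ q.edges
        · have hvu : v ≠ u := h.ne
          have hqnil : ¬ q.Nil := by
            intro hqn
            exact hvu (Walk.Nil.eq hqn).symm
          obtain ⟨w0, had, e, rfl⟩ := Walk.not_nil_iff.mp hqnil
          have hsup : u ∉ e.support := by
            have := hq.support_nodup
            rw [Walk.support_cons] at this
            exact (List.nodup_cons.mp this).1
          rw [Walk.edges_cons] at he
          rcases List.mem_cons.mp he with he1 | he2
          · have hw0 : w0 = v := by
              rw [Sym2.eq_iff] at he1
              rcases he1 with ⟨h1, h2⟩ | ⟨h1, h2⟩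
              · exact absurd h1 hvu
              · exact h1.symm
            subst hw0
            have henil : e = Walk.nil := path_loop_nil e hq.of_cons
            subst henil
            simp only [wS_cons, wS_nil]
            exact two_cycle hσ h
          · exact absurd (e.snd_mem_support_of_mem_edges he2) hsup
        · exact hb v hv _ ((Walk.cons_isCycle_iff q h).mpr ⟨hq, he⟩)
  · obtain ⟨u, hu2⟩ : ∃ u, 2 ≤ p.support.tail.count u := by
      by_contra hcon
      push_neg at hcon
      exact hnd (List.nodup_iff_count_le_one.mpr fun a => by
        have := hcon a; omega)
    have hut : u ∈ p.support.tail := by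
      rw [← List.count_pos_iff]
      omega
    have hu : u ∈ p.support := List.mem_of_mem_tail hut
    by_cases huv : u = v
    · subst huv
      have hpnil : ¬ p.Nil := by
        intro hpn
        rw [Walk.nil_iff_support_eq] at hpn
        rw [hpn] at hut
        simp at hut
      obtain ⟨w0, h, q, rfl⟩ := Walk.not_nil_iff.mp hpnil
      have hvq : u ∈ q.support := by simpa using hut
      set q1 := q.takeUntil u hvq with hq1
      set q2 := q.dropUntil u hvq with hq2
      have hspec : q1.append q2 = q := q.take_spec hvq
      have hcount1 : q1.support.count u = 1 := q.count_support_takeUntil_eq_one hvq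
      have hsupq : q.support = q1.support ++ q2.support.tail := by
        rw [← hspec, Walk.support_append]
      have hcq : 2 ≤ q.support.count u := by simpa using hu2
      have hq2t : q2.support.tail ≠ [] := by
        intro hemp
        rw [hsupq, List.count_append, hemp] at hcq
        simp [hcount1] at hcq
      have hq2len : 1 ≤ q2.length := by
        by_contra hcon
        push_neg at hcon
        have h0 : q2.length = 0 := by omega
        have hq2n := Walk.length_eq_zero_iff.mp h0
        rw [Walk.nil_iff_support_eq.mp hq2n] at hq2t
        simp at hq2t
      have hlen : n = q1.length + q2.length + 1 := by
        rw [← hn, Walk.length_cons, ← hspec, Walk.length_append]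
      have hB : wS σ (Walk.cons h q1) = 1 := by
        apply IH (q1.length + 1) (by omega) u hv
        simp
      have hC : wS σ q2 = 1 := IH q2.length (by omega) u hv q2 rfl
      rw [show Walk.cons h q = Walk.cons h (q1.append q2) by rw [hspec]]
      simp only [wS_cons, wS_append] at hB hC ⊢
      calc σ s(u, w0) * (wS σ q1 * wS σ q2) = (σ s(u, w0) * wS σ q1) * wS σ q2 := by ring
        _ = 1 := by rw [hB, hC, one_mul]
    · set t := p.takeUntil u hu with ht
      set d := p.dropUntil u hu with hd
      have hspec : t.append d = p := p.take_spec hu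
      have hcount1 : t.support.count u = 1 := p.count_support_takeUntil_eq_one hu
      have hsupp : p.support = t.support ++ d.support.tail := by
        rw [← hspec, Walk.support_append]
      have hcp : 2 ≤ p.support.count u := by
        have hpc : p.support = v :: p.support.tail := p.support_eq_cons
        rw [hpc, List.count_cons]
        simp [huv]
        omega
      have hud : u ∈ d.support.tail := by
        rw [hsupp, List.count_append, hcount1] at hcp
        rw [← List.count_pos_iff]
        omega
      have hdnil : ¬ d.Nil := by
        intro hdn
        rw [Walk.nil_iff_support_eq] at hdn
        rw [hdn] at hud
        simp at hud
      obtain ⟨w0, had, e, hde⟩ := Walk.not_nil_iff.mp hdnil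
      have hue : u ∈ e.support := by
        rw [hde] at hud
        simpa using hud
      set e1 := e.takeUntil u hue with he1
      set e2 := e.dropUntil u hue with he2
      have hespec : e1.append e2 = e := e.take_spec hue
      have htlen : 1 ≤ t.length := by
        by_contra hcon
        push_neg at hcon
        have : v = u := Walk.eq_of_length_eq_zero (p := t) (by omega)
        exact huv this.symm
      have hlen : n = t.length + (e1.length + e2.length + 1) := by
        rw [← hn, ← hspec, Walk.length_append, hde, Walk.length_cons, ← hespec,
          Walk.length_append]
      have hmku : H.connectedComponentMk u = c := by
        rw [← hv]
        exact (ConnectedComponent.sound ⟨t⟩).symm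
      have hB : wS σ (Walk.cons had e1) = 1 := by
        apply IH (e1.length + 1) (by omega) u hmku
        simp
      have hC : wS σ (t.append e2) = 1 := by
        apply IH (t.length + e2.length) (by omega) v hv
        simp [Walk.length_append]
      rw [← hspec, hde, ← hespec]
      simp only [wS_cons, wS_append] at hB hC ⊢
      calc wS σ t * (σ s(u, w0) * (wS σ e1 * wS σ e2))
          = (σ s(u, w0) * wS σ e1) * (wS σ t * wS σ e2) := by ring
        _ = 1 := by rw [hB, hC, one_mul]

/-- solutions on the component `c` -/
def SolC (H : SimpleGraph V) (σ : Sym2 V → ℤ) (C : Finset ℤ) (c : H.ConnectedComponent) :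
    Type _ :=
  {g : {v : V // H.connectedComponentMk v = c} → ℤ //
    (∀ v, g v ∈ C) ∧ ∀ (v w : V) (_ : H.Adj v w) (hv : H.connectedComponentMk v = c)
      (hw : H.connectedComponentMk w = c), g ⟨v, hv⟩ = σ s(v, w) * g ⟨w, hw⟩}

lemma mk_eq_of_adj {v w : V} (h : H.Adj v w) :
    H.connectedComponentMk v = H.connectedComponentMk w :=
  ConnectedComponent.sound h.reachable

lemma propagate_fiber {C : Finset ℤ} {c : H.ConnectedComponent} (g : SolC H σ C c)
    {a b : V} (p : H.Walk a b) (ha : H.connectedComponentMk a = c)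
    (hb : H.connectedComponentMk b = c) :
    g.1 ⟨a, ha⟩ = wS σ p * g.1 ⟨b, hb⟩ := by
  induction p with
  | nil => simp
  | cons h q ih =>
      rename_i x y z
      have hy : H.connectedComponentMk y = c := (mk_eq_of_adj h).symm.trans ha
      rw [g.2.2 x y h ha hy, ih hy hb, wS_cons]
      ring

lemma pos_walk (c : H.ConnectedComponent)
    (hpos : ∀ v w, H.Adj v w → H.connectedComponentMk v = c → σ s(v, w) = 1)
    {a b : V} (p : H.Walk a b)
    (ha : H.connectedComponentMk a = c) : wS σ p = 1 := by
  induction p with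
  | nil => simp
  | cons h q ih =>
      rename_i x y z
      have hy : H.connectedComponentMk y = c := (mk_eq_of_adj h).symm.trans ha
      rw [wS_cons, hpos x y h ha, ih hy, one_mul]

section CardSolC
variable (hσ : ∀ e ∈ H.edgeSet, σ e = 1 ∨ σ e = -1) (C : Finset ℤ) (c : H.ConnectedComponent)
include hσ

/-- balanced case core: the solutions biject with a filtered value set -/
lemma card_SolC_core
    (hbal : ∀ v, H.connectedComponentMk v = c → ∀ w : H.Walk v v, w.IsCycle → wS σ w = 1) :
    (Nat.card (SolC H σ C c) =
      C.card ∧ ∀ v w, H.Adj v w → H.connectedComponentMk v = c → σ s(v, w) = 1) ∨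
    (Nat.card (SolC H σ C c) = (C.filter (fun x => -x ∈ C)).card ∧
      ¬ ∀ v w, H.Adj v w → H.connectedComponentMk v = c → σ s(v, w) = 1) := by
  classical
  obtain ⟨r, hr⟩ : ∃ r, H.connectedComponentMk r = c := ⟨Quot.out c, c.out_eq⟩
  have hcw : ∀ (v : V), H.connectedComponentMk v = c → ∀ p : H.Walk v v, wS σ p = 1 :=
    fun v hv p => closed_walk_sign hσ c hbal p.length v hv p rfl
  have hreach : ∀ v, H.connectedComponentMk v = c → H.Reachable r v := fun v hv =>
    ConnectedComponent.exact (hr.trans hv.symm)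
  set ε : ∀ v : V, H.connectedComponentMk v = c → ℤ :=
    fun v hv => wS σ (hreach v hv).some with hεdef
  have hε_pm : ∀ v hv, ε v hv = 1 ∨ ε v hv = -1 := fun v hv => wS_pm hσ _
  have hε_sq : ∀ v hv, ε v hv * ε v hv = 1 := fun v hv => wS_sq hσ _
  have hεr : ε r hr = 1 := hcw r hr _
  have hε_walk : ∀ (v : V) (hv : H.connectedComponentMk v = c) (p : H.Walk r v),
      wS σ p = ε v hv := by
    intro v hv p
    have h1 : wS σ (p.append (hreach v hv).some.reverse) = 1 := hcw r hr _
    rw [wS_append, wS_reverse] at h1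
    calc wS σ p = wS σ p * (wS σ (hreach v hv).some * wS σ (hreach v hv).some) := by
          rw [wS_sq hσ]; ring
      _ = (wS σ p * wS σ (hreach v hv).some) * wS σ (hreach v hv).some := by ring
      _ = ε v hv := by rw [h1, one_mul]
  have hε_adj : ∀ (v w : V) (h : H.Adj v w) (hv : H.connectedComponentMk v = c)
      (hw : H.connectedComponentMk w = c), ε v hv = σ s(v, w) * ε w hw := by
    intro v w h hv hw
    have h1 : wS σ ((hreach v hv).some.append (Walk.cons h Walk.nil)) = ε w hw :=
      hε_walk w hw _
    rw [wS_append, wS_cons, wS_nil, mul_one] at h1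
    have hb1 : wS σ (hreach v hv).some = ε v hv := rfl
    rw [hb1] at h1
    have h2 : σ s(v, w) * σ s(v, w) = 1 := by
      rcases hσ s(v, w) (H.mem_edgeSet.mpr h) with h2 | h2 <;> rw [h2] <;> ring
    rw [← h1]
    calc ε v hv = ε v hv * (σ s(v, w) * σ s(v, w)) := by rw [h2, mul_one]
      _ = σ s(v, w) * (ε v hv * σ s(v, w)) := by ring
  have hkey : ∀ g : SolC H σ C c, ∀ (v : V) (hv : H.connectedComponentMk v = c),
      g.1 ⟨v, hv⟩ = ε v hv * g.1 ⟨r, hr⟩ := by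
    intro g v hv
    have h1 := propagate_fiber g (hreach v hv).some hr hv
    have hb1 : wS σ (hreach v hv).some = ε v hv := rfl
    rw [hb1] at h1
    rw [h1, ← mul_assoc, hε_sq v hv, one_mul]
  set Val : Finset ℤ :=
    C.filter (fun x => ∀ (v : V) (hv : H.connectedComponentMk v = c), ε v hv * x ∈ C)
    with hVal
  have hcard : Nat.card (SolC H σ C c) = Val.card := by
    rw [← Nat.card_eq_finsetCard]
    exact Nat.card_congr
      { toFun := fun g => ⟨g.1 ⟨r, hr⟩, by
          rw [hVal, mem_filter]
          exact ⟨g.2.1 _, fun v hv => by rw [← hkey g v hv]; exact g.2.1 _⟩⟩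
        invFun := fun x => ⟨fun v => ε v.1 v.2 * x.1,
          ⟨fun v => (mem_filter.mp x.2).2 v.1 v.2,
           fun v w h hv hw => by
            show ε v hv * x.1 = σ s(v, w) * (ε w hw * x.1)
            rw [hε_adj v w h hv hw]; ring⟩⟩
        left_inv := fun g => Subtype.ext (funext fun v => (hkey g v.1 v.2).symm)
        right_inv := fun x => Subtype.ext (by show ε r hr * x.1 = x.1; rw [hεr, one_mul]) }
  by_cases hpos : ∀ v w, H.Adj v w → H.connectedComponentMk v = c → σ s(v, w) = 1
  · left
    refine ⟨?_, hpos⟩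
    rw [hcard]
    have hVC : Val = C := by
      rw [hVal]
      apply filter_true_of_mem
      intro x hx v hv
      have h1 : ε v hv = 1 := pos_walk c hpos _ hr
      rw [h1, one_mul]
      exact hx
    rw [hVC]
  · right
    refine ⟨?_, hpos⟩
    rw [hcard]
    push_neg at hpos
    obtain ⟨v, w, h, hv, hsig⟩ := hpos
    have hw : H.connectedComponentMk w = c := (mk_eq_of_adj h).symm.trans hv
    have hsig' : σ s(v, w) = -1 := by
      rcases hσ s(v, w) (H.mem_edgeSet.mpr h) with h1 | h1
      · exact absurd h1 hsig
      · exact h1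
    have hexist : ∃ (u : V) (hu : H.connectedComponentMk u = c), ε u hu = -1 := by
      rcases hε_pm w hw with h1 | h1
      · exact ⟨v, hv, by rw [hε_adj v w h hv hw, hsig', h1]; ring⟩
      · exact ⟨w, hw, h1⟩
    congr 1
    obtain ⟨u, hu, hεu⟩ := hexist
    ext x
    simp only [hVal, mem_filter]
    constructor
    · rintro ⟨hxC, hall⟩
      refine ⟨hxC, ?_⟩
      have h1 := hall u hu
      rw [hεu, neg_one_mul] at h1
      exact h1
    · rintro ⟨hxC, hnx⟩
      refine ⟨hxC, fun v' hv' => ?_⟩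
      rcases hε_pm v' hv' with h1 | h1
      · rw [h1, one_mul]; exact hxC
      · rw [h1, neg_one_mul]; exact hnx

lemma card_SolC_pos
    (hpos : ∀ v w, H.Adj v w → H.connectedComponentMk v = c → σ s(v, w) = 1) :
    Nat.card (SolC H σ C c) = C.card := by
  have hbal : ∀ v, H.connectedComponentMk v = c → ∀ w : H.Walk v v, w.IsCycle → wS σ w = 1 :=
    fun v hv p _ => pos_walk c hpos p hv
  rcases card_SolC_core hσ C c hbal with ⟨h, _⟩ | ⟨_, h⟩
  · exact h
  · exact absurd hpos h

lemma card_SolC_balneg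
    (hbal : ∀ v, H.connectedComponentMk v = c → ∀ w : H.Walk v v, w.IsCycle → wS σ w = 1)
    (hpos : ¬ ∀ v w, H.Adj v w → H.connectedComponentMk v = c → σ s(v, w) = 1) :
    Nat.card (SolC H σ C c) = (C.filter (fun x => -x ∈ C)).card := by
  classical
  rcases card_SolC_core hσ C c hbal with ⟨_, h⟩ | ⟨h, _⟩
  · exact absurd h hpos
  · exact h

lemma card_SolC_unbal
    (hbal : ¬ ∀ v, H.connectedComponentMk v = c → ∀ w : H.Walk v v, w.IsCycle → wS σ w = 1) :
    Nat.card (SolC H σ C c) = if (0 : ℤ) ∈ C then 1 else 0 := by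
  classical
  obtain ⟨r, hr⟩ : ∃ r, H.connectedComponentMk r = c := ⟨Quot.out c, c.out_eq⟩
  push_neg at hbal
  obtain ⟨v0, hv0, w0, hw0c, hw0⟩ := hbal
  have hw0' : wS σ w0 = -1 := by
    rcases wS_pm hσ w0 with h1 | h1
    · exact absurd h1 hw0
    · exact h1
  have hzero : ∀ g : SolC H σ C c, ∀ vv : {v // H.connectedComponentMk v = c},
      g.1 vv = 0 := by
    rintro g ⟨v, hv⟩
    have h1 := propagate_fiber g w0 hv0 hv0
    rw [hw0'] at h1
    have h2 : g.1 ⟨v0, hv0⟩ = 0 := by linarith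
    have h3 := propagate_fiber g (ConnectedComponent.exact (hv0.trans hv.symm)).some hv0 hv
    rw [h2] at h3
    rcases wS_pm hσ (ConnectedComponent.exact (hv0.trans hv.symm)).some with h4 | h4 <;>
      rw [h4] at h3 <;> linarith
  by_cases h0 : (0 : ℤ) ∈ C
  · rw [if_pos h0]
    have hne : Nonempty (SolC H σ C c) :=
      ⟨⟨fun _ => 0, fun v => h0, fun v w h hv hw => by ring⟩⟩
    have hss : Subsingleton (SolC H σ C c) :=
      ⟨fun g1 g2 => Subtype.ext (funext fun v => by rw [hzero g1 v, hzero g2 v])⟩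
    exact Nat.card_eq_one_iff_unique.mpr ⟨hss, hne⟩
  · rw [if_neg h0]
    have : IsEmpty (SolC H σ C c) :=
      ⟨fun g => h0 (hzero g ⟨r, hr⟩ ▸ g.2.1 ⟨r, hr⟩)⟩
    exact Nat.card_of_isEmpty

end CardSolC

lemma solC_congr {C : Finset ℤ} (x : ∀ c, SolC H σ C c) {c c' : H.ConnectedComponent}
    (h : c = c') (w : V) (hw : H.connectedComponentMk w = c)
    (hw' : H.connectedComponentMk w = c') : (x c).1 ⟨w, hw⟩ = (x c').1 ⟨w, hw'⟩ := by
  subst h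
  rfl

/-- the global solution set splits as a product over components -/
noncomputable def solEquiv (H : SimpleGraph V) (σ : Sym2 V → ℤ) (C : Finset ℤ) :
    {κ : V → ℤ // (∀ v, κ v ∈ C) ∧ ∀ v w, H.Adj v w → κ v = σ s(v, w) * κ w} ≃
      ∀ c, SolC H σ C c where
  toFun κ := fun c => ⟨fun v => κ.1 v.1,
    ⟨fun v => κ.2.1 v.1, fun v w h _ _ => κ.2.2 v w h⟩⟩
  invFun x := ⟨fun v => (x (H.connectedComponentMk v)).1 ⟨v, rfl⟩,
    ⟨fun v => (x (H.connectedComponentMk v)).2.1 _, by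
      intro v w h
      have he : H.connectedComponentMk v = H.connectedComponentMk w := mk_eq_of_adj h
      have h1 := (x (H.connectedComponentMk v)).2.2 v w h rfl he.symm
      show (x (H.connectedComponentMk v)).1 ⟨v, rfl⟩ =
        σ s(v, w) * (x (H.connectedComponentMk w)).1 ⟨w, rfl⟩
      rw [h1, solC_congr x he w he.symm rfl]⟩⟩
  left_inv κ := Subtype.ext (funext fun v => rfl)
  right_inv x := by
    funext c
    apply Subtype.ext
    funext v
    exact solC_congr x v.2 v.1 rfl v.2

section Global

open SignedPaper

variable {lam mu : ℕ} {C : Finset ℤ}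

lemma cs_card (hlm : mu ≤ lam) (hC : IsColourSet lam mu C) : C.card = lam := by
  classical
  obtain ⟨P, U, hP0, hU0, hPU, hPneg, hUcard, hUneg, hcase | hcase⟩ := hC
  · obtain ⟨hev, hPcard, rfl⟩ := hcase
    rw [card_union_of_disjoint hPU, hPcard, hUcard]
    omega
  · obtain ⟨hev, hPcard, rfl⟩ := hcase
    have h1 : lam - mu ≠ 0 := by
      intro h; rw [h] at hev; exact hev Even.zero
    have hd1 : Disjoint (P ∪ U) ({0} : Finset ℤ) := by
      simp [disjoint_singleton_right, hP0, hU0]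
    rw [card_union_of_disjoint hd1, card_union_of_disjoint hPU, hPcard, hUcard,
      card_singleton]
    omega

lemma cs_zero_mem (hC : IsColourSet lam mu C) : (0 : ℤ) ∈ C ↔ ¬ Even (lam - mu) := by
  obtain ⟨P, U, hP0, hU0, hPU, hPneg, hUcard, hUneg, hcase | hcase⟩ := hC
  · obtain ⟨hev, hPcard, rfl⟩ := hcase
    simp [hP0, hU0, hev]
  · obtain ⟨hev, hPcard, rfl⟩ := hcase
    simp [hev]

lemma cs_sym_card (hlm : mu ≤ lam) (hC : IsColourSet lam mu C) :
    (C.filter (fun x => -x ∈ C)).card = lam - mu := by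
  classical
  obtain ⟨P, U, hP0, hU0, hPU, hPneg, hUcard, hUneg, hcase | hcase⟩ := hC
  · obtain ⟨hev, hPcard, rfl⟩ := hcase
    have : (P ∪ U).filter (fun x => -x ∈ P ∪ U) = P := by
      ext x
      simp only [mem_filter, mem_union]
      constructor
      · rintro ⟨hx | hx, h2⟩
        · exact hx
        · exfalso
          rcases h2 with h2 | h2
          · have := hPneg _ h2
            rw [neg_neg] at this
            exact (disjoint_left.mp hPU this) hx
          · exact hUneg x hx h2
      · intro hx
        exact ⟨Or.inl hx, Or.inl (hPneg _ hx)⟩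
    rw [this, hPcard]
  · obtain ⟨hev, hPcard, rfl⟩ := hcase
    have h1 : lam - mu ≠ 0 := by
      intro h; rw [h] at hev; exact hev Even.zero
    have : (P ∪ U ∪ {0}).filter (fun x => -x ∈ P ∪ U ∪ {0}) = P ∪ {0} := by
      ext x
      simp only [mem_filter, mem_union, mem_singleton]
      constructor
      · rintro ⟨(hx | hx) | hx, h2⟩
        · exact Or.inl hx
        · exfalso
          rcases h2 with (h2 | h2) | h2
          · have := hPneg _ h2
            rw [neg_neg] at this
            exact (disjoint_left.mp hPU this) hx
          · exact hUneg x hx h2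
          · rw [neg_eq_zero] at h2
            exact hU0 (h2 ▸ hx)
        · exact Or.inr hx
      · rintro (hx | hx)
        · exact ⟨Or.inl (Or.inl hx), Or.inl (Or.inl (hPneg _ hx))⟩
        · subst hx
          simp
    rw [this, card_union_of_disjoint (by simp [disjoint_singleton_right, hP0]),
      hPcard, card_singleton]
    omega

lemma delta_cast (hlm : mu ≤ lam) (hC : IsColourSet lam mu C) (δ : ℤ)
    (hδ01 : δ = 0 ∨ δ = 1) (hδ : δ % 2 = ((lam : ℤ) - mu) % 2) :
    (if (0 : ℤ) ∈ C then (1 : ℤ) else 0) = δ := by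
  by_cases hevn : Even (lam - mu)
  · have h0 : (0 : ℤ) ∉ C := by
      rw [cs_zero_mem hC]
      simpa using hevn
    rw [if_neg h0]
    rcases hδ01 with rfl | rfl
    · rfl
    · exfalso
      obtain ⟨k, hk⟩ := hevn
      omega
  · have h0 : (0 : ℤ) ∈ C := (cs_zero_mem hC).mpr hevn
    rw [if_pos h0]
    rcases hδ01 with rfl | rfl
    · exfalso
      rw [Nat.not_even_iff] at hevn
      omega
    · rfl

/-- the per-subgraph count -/
lemma cardY {V : Type*} [Fintype V] (H : SimpleGraph V) (σ : Sym2 V → ℤ)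
    (hσ : ∀ e ∈ H.edgeSet, σ e = 1 ∨ σ e = -1)
    (lam mu : ℕ) (hlm : mu ≤ lam)
    (δ : ℤ) (hδ01 : δ = 0 ∨ δ = 1) (hδ : δ % 2 = ((lam : ℤ) - mu) % 2)
    (hC : IsColourSet lam mu C) :
    (Nat.card {κ : V → ℤ // (∀ v, κ v ∈ C) ∧
        ∀ v w, H.Adj v w → κ v = σ s(v, w) * κ w} : ℤ) =
      (lam : ℤ) ^ (numPositiveComponents H σ) *
        ((lam : ℤ) - mu) ^ (numBalancedComponents H σ - numPositiveComponents H σ) *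
        δ ^ (numComponents H - numBalancedComponents H σ) := by
  classical
  haveI : Fintype H.ConnectedComponent := Fintype.ofFinite _
  set Pos : H.ConnectedComponent → Prop := fun c =>
    ∀ v w : V, H.Adj v w → H.connectedComponentMk v = c → σ s(v, w) = 1 with hPosDef
  set Bal : H.ConnectedComponent → Prop := fun c =>
    ∀ v : V, H.connectedComponentMk v = c →
      ∀ w : H.Walk v v, w.IsCycle → (w.edges.map σ).prod = 1 with hBalDef
  have hPB : ∀ c, Pos c → Bal c := fun c hp v hv p _ => pos_walk c hp p hv
  set np := (univ.filter Pos).card with hnpDef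
  set nb := (univ.filter Bal).card with hnbDef
  set nc := Fintype.card H.ConnectedComponent with hncDef
  have hPosCard : numPositiveComponents H σ = np := by
    rw [numPositiveComponents, Nat.card_eq_fintype_card, Fintype.card_subtype]
  have hBalCard : numBalancedComponents H σ = nb := by
    rw [numBalancedComponents, Nat.card_eq_fintype_card, Fintype.card_subtype]
  have hCompCard : numComponents H = nc := by
    rw [numComponents, Nat.card_eq_fintype_card]
  -- count of the intermediate classes
  have hsplit1 : (univ.filter Bal).filter Pos = univ.filter Pos := by
    ext c
    simp only [mem_filter, mem_univ, true_and]
    exact ⟨fun h => h.2, fun h => ⟨hPB c h, h⟩⟩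
  have hBalNotPos : ((univ.filter Bal).filter (fun c => ¬ Pos c)).card = nb - np := by
    have h1 := card_filter_add_card_filter_not (s := univ.filter Bal) (p := Pos)
    rw [hsplit1] at h1
    omega
  have hNotBal : (univ.filter (fun c => ¬ Bal c)).card = nc - nb := by
    have h1 := card_filter_add_card_filter_not (s := (univ : Finset _)) (p := Bal)
    rw [card_univ] at h1
    omega
  have hprod : Nat.card {κ : V → ℤ // (∀ v, κ v ∈ C) ∧
      ∀ v w, H.Adj v w → κ v = σ s(v, w) * κ w} =
      C.card ^ np * (C.filter (fun x => -x ∈ C)).card ^ (nb - np) *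
        (if (0 : ℤ) ∈ C then 1 else 0) ^ (nc - nb) := by
    rw [Nat.card_congr (solEquiv H σ C), Nat.card_pi]
    rw [← prod_filter_mul_prod_filter_not univ Pos (fun c => Nat.card (SolC H σ C c))]
    rw [← prod_filter_mul_prod_filter_not (univ.filter (fun c => ¬ Pos c)) Bal
      (fun c => Nat.card (SolC H σ C c))]
    have e1 : ∏ c ∈ univ.filter Pos, Nat.card (SolC H σ C c) = C.card ^ np := by
      rw [prod_congr rfl (fun c hc => card_SolC_pos hσ C c (by
        have := (mem_filter.mp hc).2
        rw [hPosDef] at this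
        exact this)), prod_const, hnpDef]
    have e2 : ∏ c ∈ (univ.filter (fun c => ¬ Pos c)).filter Bal,
        Nat.card (SolC H σ C c) =
        (C.filter (fun x => -x ∈ C)).card ^ (nb - np) := by
      rw [prod_congr rfl (fun c hc => by
        have h1 := mem_filter.mp hc
        have h2 := (mem_filter.mp h1.1).2
        exact card_SolC_balneg hσ C c h1.2 h2), prod_const]
      congr 1
      rw [← hBalNotPos]
      congr 1
      ext c
      simp only [mem_filter, mem_univ, true_and]
      tauto
    have e3 : ∏ c ∈ (univ.filter (fun c => ¬ Pos c)).filter (fun c => ¬ Bal c),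
        Nat.card (SolC H σ C c) =
        (if (0 : ℤ) ∈ C then 1 else 0) ^ (nc - nb) := by
      have hset : (univ.filter (fun c => ¬ Pos c)).filter (fun c => ¬ Bal c) =
          univ.filter (fun c => ¬ Bal c) := by
        ext c
        simp only [mem_filter, mem_univ, true_and]
        exact ⟨fun h => h.2, fun h => ⟨fun hp => h (hPB c hp), h⟩⟩
      rw [hset]
      refine (prod_congr rfl fun c hc => card_SolC_unbal hσ C c ?_).trans ?_
      · exact (mem_filter.mp hc).2
      · rw [prod_const, hNotBal]
    rw [e1, e2, e3, mul_assoc]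
  rw [hprod, hPosCard, hBalCard, hCompCard]
  rw [cs_card hlm hC, cs_sym_card hlm hC]
  push_cast [Nat.cast_sub hlm]
  rw [delta_cast hlm hC δ hδ01 hδ]

end Global

end SignedAux

open SignedPaper Finset in
/-- inclusion–exclusion formula for the number of proper `C`-colourings
of a signed graph for any `(λ, μ)`-colour set `C`; in particular the count does not
depend on the choice of `C`. -/
theorem stmt_12 {V : Type*} [Fintype V] [DecidableEq V]
    (G : SimpleGraph V) [DecidableRel G.Adj] (σ : Sym2 V → ℤ)
    (hσ : ∀ e ∈ G.edgeSet, σ e = 1 ∨ σ e = -1)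
    (lam mu : ℕ) (hlm : mu ≤ lam)
    (δ : ℤ) (hδ01 : δ = 0 ∨ δ = 1) (hδ : δ % 2 = ((lam : ℤ) - mu) % 2)
    (C : Finset ℤ) (hC : IsColourSet lam mu C) :
    (properCount G σ C : ℤ) =
      ∑ Y ∈ G.edgeFinset.powerset, (-1 : ℤ) ^ Y.card *
        (lam : ℤ) ^ (numPositiveComponents (restrict G Y) σ) *
        ((lam : ℤ) - mu) ^
          (numBalancedComponents (restrict G Y) σ - numPositiveComponents (restrict G Y) σ) *
        δ ^ (numComponents (restrict G Y) - numBalancedComponents (restrict G Y) σ) := by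
  classical
  have hle : ∀ Y : Finset (Sym2 V), restrict G Y ≤ G := fun Y v w (h : G.Adj v w ∧ s(v, w) ∈ Y) => h.1
  have hσ' : ∀ Y : Finset (Sym2 V),
      ∀ e ∈ (restrict G Y).edgeSet, σ e = 1 ∨ σ e = -1 := fun Y e he =>
    hσ e (SimpleGraph.edgeSet_mono (hle Y) he)
  set F : Finset (V → ℤ) := Fintype.piFinset (fun _ : V => C) with hF
  set Pe : Sym2 V → (V → ℤ) → Prop :=
    fun e κ => ∃ v w, s(v, w) = e ∧ κ v = σ e * κ w with hPeDef
  set B : (V → ℤ) → Finset (Sym2 V) :=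
    fun κ => G.edgeFinset.filter (fun e => Pe e κ) with hBDef
  have hcond : ∀ (Y : Finset (Sym2 V)), Y ⊆ G.edgeFinset → ∀ κ : V → ℤ,
      ((∀ v w, (restrict G Y).Adj v w → κ v = σ s(v, w) * κ w) ↔ (∀ e ∈ Y, Pe e κ)) := by
    intro Y hY κ
    constructor
    · intro h e heY
      induction e using Sym2.ind with
      | _ v w =>
        have hG : G.Adj v w := by
          have h2 := hY heY
          rw [SimpleGraph.mem_edgeFinset, SimpleGraph.mem_edgeSet] at h2
          exact h2
        exact ⟨v, w, rfl, h v w (And.intro hG heY)⟩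
    · intro h v w hvw
      obtain ⟨a, b, hs, heq⟩ := h s(v, w) (hvw : G.Adj v w ∧ s(v, w) ∈ Y).2
      have hGe : σ s(v, w) = 1 ∨ σ s(v, w) = -1 :=
        hσ _ (G.mem_edgeSet.mpr (hvw : G.Adj v w ∧ s(v, w) ∈ Y).1)
      rw [Sym2.eq_iff] at hs
      rcases hs with ⟨rfl, rfl⟩ | ⟨rfl, rfl⟩
      · exact heq
      · rcases hGe with h1 | h1 <;> rw [h1] at heq ⊢ <;> linarith
  have hcard : ∀ Y ∈ G.edgeFinset.powerset,
      ((F.filter (fun κ => ∀ e ∈ Y, Pe e κ)).card : ℤ) =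
        (lam : ℤ) ^ (numPositiveComponents (restrict G Y) σ) *
          ((lam : ℤ) - mu) ^
            (numBalancedComponents (restrict G Y) σ - numPositiveComponents (restrict G Y) σ) *
          δ ^ (numComponents (restrict G Y) - numBalancedComponents (restrict G Y) σ) := by
    intro Y hY
    have hYs := mem_powerset.mp hY
    have h1 : (F.filter (fun κ => ∀ e ∈ Y, Pe e κ)).card =
        Nat.card {κ : V → ℤ // (∀ v, κ v ∈ C) ∧
          ∀ v w, (restrict G Y).Adj v w → κ v = σ s(v, w) * κ w} := by
      rw [← Nat.card_eq_finsetCard]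
      apply Nat.card_congr
      apply Equiv.subtypeEquivRight
      intro κ
      rw [mem_filter, Fintype.mem_piFinset]
      constructor
      · rintro ⟨ha, hb⟩
        exact ⟨ha, (hcond Y hYs κ).mpr hb⟩
      · rintro ⟨ha, hb⟩
        exact ⟨ha, (hcond Y hYs κ).mp hb⟩
    rw [h1]
    exact SignedAux.cardY (restrict G Y) σ (hσ' Y) lam mu hlm δ hδ01 hδ hC
  have hpc : properCount G σ C = (F.filter (fun κ => B κ = ∅)).card := by
    have hdef : properCount G σ C = (ProperColourings G σ C).ncard := rfl
    rw [hdef, ← Nat.card_coe_set_eq, ← Nat.card_eq_finsetCard]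
    apply Nat.card_congr
    apply Equiv.subtypeEquivRight
    intro κ
    simp only [ProperColourings, Set.mem_setOf_eq, mem_filter, hF, Fintype.mem_piFinset,
      hBDef, filter_eq_empty_iff]
    constructor
    · rintro ⟨ha, hb⟩
      refine ⟨ha, ?_⟩
      intro e he
      induction e using Sym2.ind with
      | _ v w =>
        have hG : G.Adj v w := by
          rw [SimpleGraph.mem_edgeFinset, SimpleGraph.mem_edgeSet] at he
          exact he
        rintro ⟨a, b, hs, heq⟩
        have hGe : σ s(v, w) = 1 ∨ σ s(v, w) = -1 :=
          hσ _ (G.mem_edgeSet.mpr hG)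
        rw [Sym2.eq_iff] at hs
        rcases hs with ⟨rfl, rfl⟩ | ⟨rfl, rfl⟩
        · exact hb a b hG heq
        · refine hb b a hG ?_
          rcases hGe with h1 | h1 <;> rw [h1] at heq ⊢ <;> linarith
    · rintro ⟨ha, hb⟩
      refine ⟨ha, ?_⟩
      intro v w hvw heq
      exact hb (SimpleGraph.mem_edgeFinset.mpr (G.mem_edgeSet.mpr hvw))
        ⟨v, w, rfl, heq⟩
  calc ((properCount G σ C : ℤ))
      = ((F.filter (fun κ => B κ = ∅)).card : ℤ) := by rw [hpc]
    _ = ∑ κ ∈ F, (if B κ = ∅ then (1 : ℤ) else 0) := (sum_boole _ _).symm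
    _ = ∑ κ ∈ F, ∑ Y ∈ (B κ).powerset, (-1 : ℤ) ^ Y.card := by
        refine sum_congr rfl fun κ _ => ?_
        exact sum_powerset_neg_one_pow_card.symm
    _ = ∑ κ ∈ F, ∑ Y ∈ G.edgeFinset.powerset,
          (if Y ⊆ B κ then (-1 : ℤ) ^ Y.card else 0) := by
        refine sum_congr rfl fun κ _ => ?_
        rw [← sum_filter]
        congr 1
        ext Z
        simp only [mem_powerset, mem_filter]
        exact ⟨fun h => ⟨h.trans (filter_subset _ _), h⟩, fun h => h.2⟩
    _ = ∑ Y ∈ G.edgeFinset.powerset, ∑ κ ∈ F,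
          (if Y ⊆ B κ then (-1 : ℤ) ^ Y.card else 0) := Finset.sum_comm
    _ = ∑ Y ∈ G.edgeFinset.powerset, (-1 : ℤ) ^ Y.card *
          ((F.filter (fun κ => ∀ e ∈ Y, Pe e κ)).card : ℤ) := by
        refine sum_congr rfl fun Y hY => ?_
        have hYs := mem_powerset.mp hY
        have hiff : ∀ κ : V → ℤ, (Y ⊆ B κ) ↔ (∀ e ∈ Y, Pe e κ) := by
          intro κ
          constructor
          · intro hsub e he
            exact (mem_filter.mp (hsub he)).2
          · intro h e he
            exact mem_filter.mpr ⟨hYs he, h e he⟩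
        calc ∑ κ ∈ F, (if Y ⊆ B κ then (-1 : ℤ) ^ Y.card else 0)
            = ∑ κ ∈ F, (-1 : ℤ) ^ Y.card * (if (∀ e ∈ Y, Pe e κ) then 1 else 0) := by
              refine sum_congr rfl fun κ _ => ?_
              rw [mul_ite, mul_one, mul_zero]
              exact if_congr (hiff κ) rfl rfl
          _ = (-1 : ℤ) ^ Y.card * ∑ κ ∈ F, (if (∀ e ∈ Y, Pe e κ) then (1 : ℤ) else 0) := by
              rw [mul_sum]
          _ = (-1 : ℤ) ^ Y.card * ((F.filter (fun κ => ∀ e ∈ Y, Pe e κ)).card : ℤ) := by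
              rw [sum_boole]
    _ = ∑ Y ∈ G.edgeFinset.powerset, (-1 : ℤ) ^ Y.card *
          (lam : ℤ) ^ (numPositiveComponents (restrict G Y) σ) *
          ((lam : ℤ) - mu) ^
            (numBalancedComponents (restrict G Y) σ - numPositiveComponents (restrict G Y) σ) *
          δ ^ (numComponents (restrict G Y) - numBalancedComponents (restrict G Y) σ) := by
        refine sum_congr rfl fun Y hY => ?_
        rw [hcard Y hY]
        ring
end

section
/- Let Σ be a signed graph and let v be a positive dominating vertex of Σ, i.e. v is joined by a positive edge to every other vertex of Σ. Let p, q ∈ ℤ[x,y] be the even and odd bivariate chromatic polynomials of Σ (so p(λ, μ) = f(Σ, λ, μ) for all integers λ ≥ μ ≥ 0 with λ−μ even and q(λ, μ) = f(Σ, λ, μ) for all integers λ ≥ μ ≥ 0 with λ−μ odd), and let p′, q′ be those of the signed graph Σ∖v obtained by deleting v and all edges incident with v. Then p(x, y) = y·p′(x−1, y−1) + (x−y)·p′(x−1, y+1) and q(x, y) = y·q′(x−1, y−1) + (x−y−1)·q′(x−1, y+1) + p′(x−1, y), where p′(x−1, y±1) denotes the polynomial obtained by substituting x−1 for x and y±1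 for y. -/
open Finset

section AuxLemmas
open Finset MvPolynomial

private lemma polyEval_eval (a : ℤ) (g : Fin 2 → Polynomial ℤ) (r : MvPolynomial (Fin 2) ℤ) :
    Polynomial.eval a (MvPolynomial.aeval g r) =
      MvPolynomial.eval (fun i => Polynomial.eval a (g i)) r := by
  induction r using MvPolynomial.induction_on with
  | C => simp
  | add p q hp hq => simp [hp, hq]
  | mul_X p i hp => simp [hp]

private lemma eval_bind₁' (x : Fin 2 → ℤ) (f : Fin 2 → MvPolynomial (Fin 2) ℤ)
    (φ : MvPolynomial (Fin 2) ℤ) :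
    eval x (bind₁ f φ) = eval (fun i => eval x (f i)) φ := by
  induction φ using MvPolynomial.induction_on with
  | C => simp
  | add p q hp hq => simp [hp, hq]
  | mul_X p i hp => simp [hp]

private lemma vec_ext (a b : ℤ) (x : Fin 2 → ℤ) (h0 : x 0 = a) (h1 : x 1 = b) :
    x = ![a, b] := by
  funext i; fin_cases i <;> simp [h0, h1]

private lemma eval_bind_pts (x : Fin 2 → ℤ) (f0 f1 : MvPolynomial (Fin 2) ℤ)
    (φ : MvPolynomial (Fin 2) ℤ) :
    eval x (bind₁ ![f0, f1] φ) = eval ![eval x f0, eval x f1] φ := by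
  rw [eval_bind₁']
  exact congrArg (fun t => eval t φ) (vec_ext _ _ _ (by simp) (by simp))

private lemma vanish_zero (e : ℤ) (r : MvPolynomial (Fin 2) ℤ)
    (h : ∀ k m : ℕ, eval ![(m : ℤ) + 2 * k + e, (m : ℤ)] r = 0) : r = 0 := by
  have step1 : ∀ (m : ℕ) (a : ℤ), eval ![a, (m : ℤ)] r = 0 := by
    intro m a
    set f : Polynomial ℤ := MvPolynomial.aeval ![Polynomial.X, Polynomial.C (m : ℤ)] r with hf
    have key : ∀ x : ℤ, Polynomial.eval x f = eval ![x, (m : ℤ)] r := by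
      intro x
      rw [hf, polyEval_eval]
      exact congrArg (fun t => eval t r) (vec_ext _ _ _ (by simp) (by simp))
    have hroots : {x : ℤ | f.IsRoot x}.Infinite := by
      apply Set.Infinite.mono (s := Set.range (fun k : ℕ => (m : ℤ) + 2 * k + e))
      · rintro x ⟨k, rfl⟩
        show f.IsRoot _
        rw [Polynomial.IsRoot, key]
        exact h k m
      · exact Set.infinite_range_of_injective (by intro a b hab; simpa using hab)
    have hf0 : f = 0 := Polynomial.eq_zero_of_infinite_isRoot f hroots
    rw [← key a, hf0, Polynomial.eval_zero]
  have step2 : ∀ a b : ℤ, eval ![a, b] r = 0 := by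
    intro a b
    set f : Polynomial ℤ := MvPolynomial.aeval ![Polynomial.C a, Polynomial.X] r with hf
    have key : ∀ x : ℤ, Polynomial.eval x f = eval ![a, x] r := by
      intro x
      rw [hf, polyEval_eval]
      exact congrArg (fun t => eval t r) (vec_ext _ _ _ (by simp) (by simp))
    have hroots : {x : ℤ | f.IsRoot x}.Infinite := by
      apply Set.Infinite.mono (s := Set.range (fun m : ℕ => (m : ℤ)))
      · rintro x ⟨m, rfl⟩
        show f.IsRoot _
        rw [Polynomial.IsRoot, key]
        exact step1 m a
      · exact Set.infinite_range_of_injective (fun a b hab => by simpa using hab)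
    have hf0 : f = 0 := Polynomial.eq_zero_of_infinite_isRoot f hroots
    rw [← key b, hf0, Polynomial.eval_zero]
  apply MvPolynomial.funext
  intro x
  rw [vec_ext (x 0) (x 1) x rfl rfl]
  simpa using step2 (x 0) (x 1)

private lemma properColourings_finite {V : Type*} [Finite V] (G : SimpleGraph V)
    (σ : Sym2 V → ℤ) (C : Finset ℤ) : (SignedPaper.ProperColourings G σ C).Finite := by
  apply Set.Finite.subset (Set.Finite.pi (fun _ : V => C.finite_toSet))
  intro κ hκ
  intro i _
  exact hκ.1 i

private lemma count_split {V : Type*} [Fintype V] (G : SimpleGraph V) (σ : Sym2 V → ℤ)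
    (v : V) (hv : ∀ w : V, w ≠ v → G.Adj v w ∧ σ s(v, w) = 1) (C : Finset ℤ) :
    SignedPaper.properCount G σ C =
      ∑ c ∈ C, SignedPaper.properCount (G.comap (Subtype.val : {w : V // w ≠ v} → V))
        (fun e => σ (e.map Subtype.val)) (C.erase c) := by
  classical
  set G' := G.comap (Subtype.val : {w : V // w ≠ v} → V) with hG'
  set σ' : Sym2 {w : V // w ≠ v} → ℤ := fun e => σ (e.map Subtype.val) with hσ'
  have hS := properColourings_finite G σ C
  have hS' : ∀ c, (SignedPaper.ProperColourings G' σ' (C.erase c)).Finite :=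
    fun c => properColourings_finite G' σ' (C.erase c)
  have adj' : ∀ a b : {w : V // w ≠ v}, G'.Adj a b ↔ G.Adj a.val b.val := fun a b => Iff.rfl
  have sig' : ∀ a b : {w : V // w ≠ v}, σ' s(a, b) = σ s(a.val, b.val) := fun a b => by
    simp [hσ']
  rw [SignedPaper.properCount, Set.ncard_eq_toFinset_card _ hS]
  rw [Finset.card_eq_sum_card_fiberwise (f := fun κ : V → ℤ => κ v) (t := C)
    (fun κ hκ => by exact ((hS.mem_toFinset).1 hκ).1 v)]
  refine Finset.sum_congr rfl (fun c hc => ?_)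
  rw [SignedPaper.properCount, Set.ncard_eq_toFinset_card _ (hS' c)]
  apply Finset.card_bij (fun κ _ => (fun w : {w : V // w ≠ v} => κ w.val))
  · rintro κ hκ
    simp only [Finset.mem_filter, Set.Finite.mem_toFinset] at hκ ⊢
    obtain ⟨⟨hmem, hedge⟩, hκv⟩ := hκ
    constructor
    · intro w
      refine Finset.mem_erase.2 ⟨?_, hmem w.val⟩
      have h1 := hedge v w.val ((hv w.val w.2).1)
      rw [(hv w.val w.2).2, one_mul, hκv] at h1
      exact fun hcon => h1 (hcon ▸ rfl)
    · intro a b hab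
      rw [sig' a b]
      exact hedge a.val b.val ((adj' a b).1 hab)
  · rintro κ₁ hκ₁ κ₂ hκ₂ heq
    simp only [Finset.mem_filter, Set.Finite.mem_toFinset] at hκ₁ hκ₂
    funext w
    by_cases hw : w = v
    · rw [hw, hκ₁.2, hκ₂.2]
    · exact congrFun heq ⟨w, hw⟩
  · rintro κ' hκ'
    simp only [Set.Finite.mem_toFinset] at hκ'
    obtain ⟨hmem', hedge'⟩ := hκ'
    refine ⟨fun w => if h : w = v then c else κ' ⟨w, h⟩, ?_, ?_⟩
    · rw [Finset.mem_filter, Set.Finite.mem_toFinset]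
      refine ⟨⟨?_, ?_⟩, by simp⟩
      · intro w
        by_cases hw : w = v
        · simpa [hw] using hc
        · simpa [hw] using Finset.mem_of_mem_erase (hmem' ⟨w, hw⟩)
      · intro a b hab
        have hne : a ≠ b := hab.ne
        by_cases ha : a = v
        · have hb : b ≠ v := fun h => hne (h ▸ ha)
          simp only [dif_pos ha, dif_neg hb]
          rw [ha, (hv b hb).2, one_mul]
          have := Finset.mem_erase.1 (hmem' ⟨b, hb⟩)
          exact fun h => this.1 h.symm
        · by_cases hb : b = v
          · simp only [dif_neg ha, dif_pos hb]
            rw [hb, show s(a, v) = s(v, a) from Sym2.eq_swap, (hv a ha).2, one_mul]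
            have := Finset.mem_erase.1 (hmem' ⟨a, ha⟩)
            exact this.1
          · simp only [dif_neg ha, dif_neg hb]
            have := hedge' ⟨a, ha⟩ ⟨b, hb⟩ ((adj' _ _).2 hab)
            rwa [sig'] at this
    · funext w
      simp [w.2]

private lemma exists_PU (lam mu : ℕ) :
    ∃ P U : Finset ℤ, (0:ℤ) ∉ P ∧ (0:ℤ) ∉ U ∧ Disjoint P U ∧
      (∀ x ∈ P, -x ∈ P) ∧ U.card = mu ∧ (∀ x ∈ U, -x ∉ U) ∧
      P.card = 2 * ((lam - mu) / 2) := by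
  set h : ℕ := (lam - mu) / 2 with hh
  refine ⟨(Finset.Icc (-(h:ℤ)) h).erase 0, Finset.Icc ((h:ℤ)+1) ((h:ℤ)+mu),
    ?_, ?_, ?_, ?_, ?_, ?_, ?_⟩
  · simp
  · intro hmem
    rw [Finset.mem_Icc] at hmem
    omega
  · rw [Finset.disjoint_left]
    intro x hx hx'
    rw [Finset.mem_erase, Finset.mem_Icc] at hx
    rw [Finset.mem_Icc] at hx'
    omega
  · intro x hx
    rw [Finset.mem_erase, Finset.mem_Icc] at hx ⊢
    omega
  · rw [Int.card_Icc]
    omega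
  · intro x hx hx'
    rw [Finset.mem_Icc] at hx hx'
    omega
  · rw [Finset.card_erase_of_mem (by rw [Finset.mem_Icc]; omega), Int.card_Icc]
    omega

section EraseLemmas
variable {P U : Finset ℤ} {c : ℤ}
  (h0P : (0:ℤ) ∉ P) (h0U : (0:ℤ) ∉ U) (hPU : Disjoint P U)
  (hnegP : ∀ x ∈ P, -x ∈ P) (hnegU : ∀ x ∈ U, -x ∉ U)

include h0P h0U hPU hnegP hnegU

private lemma eraseU_props (hc : c ∈ U) :
    (0:ℤ) ∉ P ∧ (0:ℤ) ∉ U.erase c ∧ Disjoint P (U.erase c) ∧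
    (∀ x ∈ P, -x ∈ P) ∧ (U.erase c).card = U.card - 1 ∧ (∀ x ∈ U.erase c, -x ∉ U.erase c) ∧
    (P ∪ U).erase c = P ∪ U.erase c ∧
    (P ∪ U ∪ {0}).erase c = P ∪ U.erase c ∪ {0} := by
  have hcP : c ∉ P := Finset.disjoint_right.1 hPU hc
  have hc0 : c ≠ 0 := fun h => h0U (h ▸ hc)
  refine ⟨h0P, fun h => h0U (Finset.mem_of_mem_erase h), hPU.mono_right (Finset.erase_subset _ _),
    hnegP, Finset.card_erase_of_mem hc, ?_, ?_, ?_⟩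
  · intro x hx hx'
    exact hnegU x (Finset.mem_of_mem_erase hx) (Finset.mem_of_mem_erase hx')
  · ext x
    simp only [Finset.mem_erase, Finset.mem_union]
    constructor
    · rintro ⟨hne, hP | hU⟩
      · exact Or.inl hP
      · exact Or.inr ⟨hne, hU⟩
    · rintro (hP | ⟨hne, hU⟩)
      · exact ⟨fun h => hcP (h ▸ hP), Or.inl hP⟩
      · exact ⟨hne, Or.inr hU⟩
  · ext x
    simp only [Finset.mem_erase, Finset.mem_union, Finset.mem_singleton]
    constructor
    · rintro ⟨hne, (hP | hU) | h0⟩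
      · exact Or.inl (Or.inl hP)
      · exact Or.inl (Or.inr ⟨hne, hU⟩)
      · exact Or.inr h0
    · rintro ((hP | ⟨hne, hU⟩) | h0)
      · exact ⟨fun h => hcP (h ▸ hP), Or.inl (Or.inl hP)⟩
      · exact ⟨hne, Or.inl (Or.inr hU)⟩
      · exact ⟨fun h => hc0 (by omega), Or.inr h0⟩

private lemma eraseP_props (hc : c ∈ P) :
    (0:ℤ) ∉ (P.erase c).erase (-c) ∧ (0:ℤ) ∉ insert (-c) U ∧
    Disjoint ((P.erase c).erase (-c)) (insert (-c) U) ∧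
    (∀ x ∈ (P.erase c).erase (-c), -x ∈ (P.erase c).erase (-c)) ∧
    (insert (-c) U).card = U.card + 1 ∧
    (∀ x ∈ insert (-c) U, -x ∉ insert (-c) U) ∧
    (P ∪ U).erase c = (P.erase c).erase (-c) ∪ insert (-c) U ∧
    (P ∪ U ∪ {0}).erase c = (P.erase c).erase (-c) ∪ insert (-c) U ∪ {0} ∧
    ((P.erase c).erase (-c)).card = P.card - 2 := by
  have hcU : c ∉ U := Finset.disjoint_left.1 hPU hc
  have hc0 : c ≠ 0 := fun h => h0P (h ▸ hc)
  have hncP : -c ∈ P := hnegP c hc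
  have hncc : -c ≠ c := fun h => hc0 (by omega)
  have hncU : -c ∉ U := Finset.disjoint_left.1 hPU hncP
  refine ⟨?_, ?_, ?_, ?_, ?_, ?_, ?_, ?_, ?_⟩
  · intro h; exact h0P (Finset.mem_of_mem_erase (Finset.mem_of_mem_erase h))
  · intro h
    rcases Finset.mem_insert.1 h with h | h
    · exact hc0 (by omega)
    · exact h0U h
  · rw [Finset.disjoint_left]
    intro x hx hx'
    rw [Finset.mem_erase, Finset.mem_erase] at hx
    rcases Finset.mem_insert.1 hx' with h | h
    · exact hx.1 h
    · exact Finset.disjoint_left.1 hPU hx.2.2 h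
  · intro x hx
    rw [Finset.mem_erase, Finset.mem_erase] at hx ⊢
    exact ⟨fun h => hx.2.1 (by omega), fun h => hx.1 (by omega), hnegP x hx.2.2⟩
  · exact Finset.card_insert_of_notMem hncU
  · intro x hx hx'
    rcases Finset.mem_insert.1 hx with h | h
    · rcases Finset.mem_insert.1 hx' with h' | h'
      · exact hncc (by omega)
      · subst h; rw [neg_neg] at h'; exact hcU h'
    · rcases Finset.mem_insert.1 hx' with h' | h'
      · have hxc : x = c := by omega
        exact hcU (hxc ▸ h)
      · exact hnegU x h h'
  · ext x
    simp only [Finset.mem_erase, Finset.mem_union, Finset.mem_insert]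
    constructor
    · rintro ⟨hne, hP | hU⟩
      · by_cases hx : x = -c
        · exact Or.inr (Or.inl hx)
        · exact Or.inl ⟨hx, hne, hP⟩
      · exact Or.inr (Or.inr hU)
    · rintro (⟨h1, h2, h3⟩ | hx | hU)
      · exact ⟨h2, Or.inl h3⟩
      · exact ⟨fun h => hncc (by omega), Or.inl (hx ▸ hncP)⟩
      · exact ⟨fun h => hcU (h ▸ hU), Or.inr hU⟩
  · ext x
    simp only [Finset.mem_erase, Finset.mem_union, Finset.mem_insert, Finset.mem_singleton]
    constructor
    · rintro ⟨hne, (hP | hU) | h0⟩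
      · by_cases hx : x = -c
        · exact Or.inl (Or.inr (Or.inl hx))
        · exact Or.inl (Or.inl ⟨hx, hne, hP⟩)
      · exact Or.inl (Or.inr (Or.inr hU))
      · exact Or.inr h0
    · rintro ((⟨h1, h2, h3⟩ | hx | hU) | h0)
      · exact ⟨h2, Or.inl (Or.inl h3)⟩
      · exact ⟨fun h => hncc (by omega), Or.inl (Or.inl (hx ▸ hncP))⟩
      · exact ⟨fun h => hcU (h ▸ hU), Or.inl (Or.inr hU)⟩
      · exact ⟨fun h => hc0 (by omega), Or.inr h0⟩
  · rw [Finset.card_erase_of_mem (Finset.mem_erase.2 ⟨hncc, hncP⟩),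
      Finset.card_erase_of_mem hc]
    omega

private lemma erase_zero_eq : (P ∪ U ∪ {0}).erase 0 = P ∪ U := by
  ext x
  simp only [Finset.mem_erase, Finset.mem_union, Finset.mem_singleton]
  constructor
  · rintro ⟨hne, (hP | hU) | h0⟩
    · exact Or.inl hP
    · exact Or.inr hU
    · exact absurd h0 hne
  · rintro (hP | hU)
    · exact ⟨fun h => h0P (h ▸ hP), Or.inl (Or.inl hP)⟩
    · exact ⟨fun h => h0U (h ▸ hU), Or.inl (Or.inr hU)⟩

end EraseLemmas
end AuxLemmas

open SignedPaper MvPolynomial in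
/-- deletion formulae for a positive dominating vertex, for the even and
odd bivariate chromatic polynomials (variable `0` is `x`, variable `1` is `y`). -/
theorem stmt_15 {V : Type*} [Fintype V] (G : SimpleGraph V) (σ : Sym2 V → ℤ)
    (hσ : ∀ e ∈ G.edgeSet, σ e = 1 ∨ σ e = -1)
    (v : V) (hv : ∀ w : V, w ≠ v → G.Adj v w ∧ σ s(v, w) = 1)
    (p q p' q' : MvPolynomial (Fin 2) ℤ)
    (hp : ∀ lam mu : ℕ, mu ≤ lam → Even (lam - mu) → ∀ C : Finset ℤ,
      IsColourSet lam mu C →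
        MvPolynomial.eval ![(lam : ℤ), (mu : ℤ)] p = properCount G σ C)
    (hq : ∀ lam mu : ℕ, mu ≤ lam → ¬ Even (lam - mu) → ∀ C : Finset ℤ,
      IsColourSet lam mu C →
        MvPolynomial.eval ![(lam : ℤ), (mu : ℤ)] q = properCount G σ C)
    (hp' : ∀ lam mu : ℕ, mu ≤ lam → Even (lam - mu) → ∀ C : Finset ℤ,
      IsColourSet lam mu C →
        MvPolynomial.eval ![(lam : ℤ), (mu : ℤ)] p' =
          properCount (G.comap (Subtype.val : {w : V // w ≠ v} → V))
            (fun e => σ (e.map Subtype.val)) C)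
    (hq' : ∀ lam mu : ℕ, mu ≤ lam → ¬ Even (lam - mu) → ∀ C : Finset ℤ,
      IsColourSet lam mu C →
        MvPolynomial.eval ![(lam : ℤ), (mu : ℤ)] q' =
          properCount (G.comap (Subtype.val : {w : V // w ≠ v} → V))
            (fun e => σ (e.map Subtype.val)) C) :
    p = X 1 * MvPolynomial.bind₁ ![X 0 - 1, X 1 - 1] p' +
        (X 0 - X 1) * MvPolynomial.bind₁ ![X 0 - 1, X 1 + 1] p' ∧
    q = X 1 * MvPolynomial.bind₁ ![X 0 - 1, X 1 - 1] q' +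
        (X 0 - X 1 - 1) * MvPolynomial.bind₁ ![X 0 - 1, X 1 + 1] q' +
        MvPolynomial.bind₁ ![X 0 - 1, X 1] p' := by
  classical
  set G' := G.comap (Subtype.val : {w : V // w ≠ v} → V) with hG'def
  set σ' : Sym2 {w : V // w ≠ v} → ℤ := fun e => σ (e.map Subtype.val) with hσ'def
  -- key even identity
  have keyEven : ∀ lam mu : ℕ, mu ≤ lam → Even (lam - mu) →
      MvPolynomial.eval ![(lam : ℤ), (mu : ℤ)] p =
        (mu : ℤ) * MvPolynomial.eval ![(lam : ℤ) - 1, (mu : ℤ) - 1] p' +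
        ((lam : ℤ) - (mu : ℤ)) * MvPolynomial.eval ![(lam : ℤ) - 1, (mu : ℤ) + 1] p' := by
    intro lam mu hml hev
    rw [Nat.even_iff] at hev
    obtain ⟨P, U, h0P, h0U, hPU, hnegP, hUcard, hnegU, hPcard0⟩ := exists_PU lam mu
    have hPcard : P.card = lam - mu := by omega
    have hCS : IsColourSet lam mu (P ∪ U) :=
      ⟨P, U, h0P, h0U, hPU, hnegP, hUcard, hnegU,
        Or.inl ⟨Nat.even_iff.2 hev, hPcard, rfl⟩⟩
    rw [hp lam mu hml (Nat.even_iff.2 hev) _ hCS, count_split G σ v hv (P ∪ U),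
      Nat.cast_sum, Finset.sum_union hPU]
    have hU : ∀ c ∈ U, (properCount G' σ' ((P ∪ U).erase c) : ℤ) =
        MvPolynomial.eval ![(lam : ℤ) - 1, (mu : ℤ) - 1] p' := by
      intro c hc
      have hmu1 : 1 ≤ mu := by
        have := Finset.card_pos.2 ⟨c, hc⟩; omega
      obtain ⟨e0, e1, e2, e3, e4, e5, e6, _⟩ := eraseU_props h0P h0U hPU hnegP hnegU hc
      have hCS' : IsColourSet (lam - 1) (mu - 1) ((P ∪ U).erase c) :=
        ⟨P, U.erase c, e0, e1, e2, e3, by omega, e5,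
          Or.inl ⟨by rw [Nat.even_iff]; omega, by omega, e6⟩⟩
      have := hp' (lam - 1) (mu - 1) (by omega) (by rw [Nat.even_iff]; omega) _ hCS'
      rw [← this, show ((lam - 1 : ℕ) : ℤ) = (lam : ℤ) - 1 by omega,
        show ((mu - 1 : ℕ) : ℤ) = (mu : ℤ) - 1 by omega]
    have hP : ∀ c ∈ P, (properCount G' σ' ((P ∪ U).erase c) : ℤ) =
        MvPolynomial.eval ![(lam : ℤ) - 1, (mu : ℤ) + 1] p' := by
      intro c hc
      have hlm2 : 2 ≤ lam - mu := by
        have := Finset.card_pos.2 ⟨c, hc⟩; omega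
      obtain ⟨e0, e1, e2, e3, e4, e5, e6, _, e8⟩ := eraseP_props h0P h0U hPU hnegP hnegU hc
      have hCS' : IsColourSet (lam - 1) (mu + 1) ((P ∪ U).erase c) :=
        ⟨(P.erase c).erase (-c), insert (-c) U, e0, e1, e2, e3, by omega, e5,
          Or.inl ⟨by rw [Nat.even_iff]; omega, by omega, e6⟩⟩
      have := hp' (lam - 1) (mu + 1) (by omega) (by rw [Nat.even_iff]; omega) _ hCS'
      rw [← this, show ((lam - 1 : ℕ) : ℤ) = (lam : ℤ) - 1 by omega,
        show ((mu + 1 : ℕ) : ℤ) = (mu : ℤ) + 1 by push_cast; ring]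
    rw [Finset.sum_congr rfl hU, Finset.sum_congr rfl hP, Finset.sum_const, Finset.sum_const,
      hUcard, hPcard, nsmul_eq_mul, nsmul_eq_mul]
    push_cast [Nat.cast_sub hml]
    ring
  -- key odd identity
  have keyOdd : ∀ lam mu : ℕ, mu ≤ lam → ¬ Even (lam - mu) →
      MvPolynomial.eval ![(lam : ℤ), (mu : ℤ)] q =
        (mu : ℤ) * MvPolynomial.eval ![(lam : ℤ) - 1, (mu : ℤ) - 1] q' +
        ((lam : ℤ) - (mu : ℤ) - 1) * MvPolynomial.eval ![(lam : ℤ) - 1, (mu : ℤ) + 1] q' +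
        MvPolynomial.eval ![(lam : ℤ) - 1, (mu : ℤ)] p' := by
    intro lam mu hml hodd
    rw [Nat.not_even_iff] at hodd
    obtain ⟨P, U, h0P, h0U, hPU, hnegP, hUcard, hnegU, hPcard0⟩ := exists_PU lam mu
    have hPcard : P.card = lam - mu - 1 := by omega
    have hCS : IsColourSet lam mu (P ∪ U ∪ {0}) :=
      ⟨P, U, h0P, h0U, hPU, hnegP, hUcard, hnegU,
        Or.inr ⟨by rw [Nat.even_iff]; omega, hPcard, rfl⟩⟩
    have h0PU : Disjoint (P ∪ U) ({0} : Finset ℤ) := by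
      rw [Finset.disjoint_singleton_right, Finset.mem_union]
      rintro (h | h)
      · exact h0P h
      · exact h0U h
    rw [hq lam mu hml (by rw [Nat.not_even_iff]; omega) _ hCS,
      count_split G σ v hv (P ∪ U ∪ {0}), Nat.cast_sum, Finset.sum_union h0PU,
      Finset.sum_union hPU, Finset.sum_singleton]
    have hU : ∀ c ∈ U, (properCount G' σ' ((P ∪ U ∪ {0}).erase c) : ℤ) =
        MvPolynomial.eval ![(lam : ℤ) - 1, (mu : ℤ) - 1] q' := by
      intro c hc
      have hmu1 : 1 ≤ mu := by
        have := Finset.card_pos.2 ⟨c, hc⟩; omega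
      obtain ⟨e0, e1, e2, e3, e4, e5, _, e7⟩ := eraseU_props h0P h0U hPU hnegP hnegU hc
      have hCS' : IsColourSet (lam - 1) (mu - 1) ((P ∪ U ∪ {0}).erase c) :=
        ⟨P, U.erase c, e0, e1, e2, e3, by omega, e5,
          Or.inr ⟨by rw [Nat.not_even_iff]; omega, by omega, e7⟩⟩
      have := hq' (lam - 1) (mu - 1) (by omega) (by rw [Nat.not_even_iff]; omega) _ hCS'
      rw [← this, show ((lam - 1 : ℕ) : ℤ) = (lam : ℤ) - 1 by omega,
        show ((mu - 1 : ℕ) : ℤ) = (mu : ℤ) - 1 by omega]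
    have hP : ∀ c ∈ P, (properCount G' σ' ((P ∪ U ∪ {0}).erase c) : ℤ) =
        MvPolynomial.eval ![(lam : ℤ) - 1, (mu : ℤ) + 1] q' := by
      intro c hc
      have hlm2 : 2 ≤ lam - mu := by
        have := Finset.card_pos.2 ⟨c, hc⟩; omega
      obtain ⟨e0, e1, e2, e3, e4, e5, _, e7, e8⟩ := eraseP_props h0P h0U hPU hnegP hnegU hc
      have hCS' : IsColourSet (lam - 1) (mu + 1) ((P ∪ U ∪ {0}).erase c) :=
        ⟨(P.erase c).erase (-c), insert (-c) U, e0, e1, e2, e3, by omega, e5,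
          Or.inr ⟨by rw [Nat.not_even_iff]; omega, by omega, e7⟩⟩
      have := hq' (lam - 1) (mu + 1) (by omega) (by rw [Nat.not_even_iff]; omega) _ hCS'
      rw [← this, show ((lam - 1 : ℕ) : ℤ) = (lam : ℤ) - 1 by omega,
        show ((mu + 1 : ℕ) : ℤ) = (mu : ℤ) + 1 by push_cast; ring]
    have h0 : (properCount G' σ' ((P ∪ U ∪ {0}).erase 0) : ℤ) =
        MvPolynomial.eval ![(lam : ℤ) - 1, (mu : ℤ)] p' := by
      have hCS' : IsColourSet (lam - 1) mu ((P ∪ U ∪ {0}).erase 0) :=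
        ⟨P, U, h0P, h0U, hPU, hnegP, hUcard, hnegU,
          Or.inl ⟨by rw [Nat.even_iff]; omega, by omega,
            erase_zero_eq h0P h0U hPU hnegP hnegU⟩⟩
      have := hp' (lam - 1) mu (by omega) (by rw [Nat.even_iff]; omega) _ hCS'
      rw [← this, show ((lam - 1 : ℕ) : ℤ) = (lam : ℤ) - 1 by omega]
    rw [Finset.sum_congr rfl hU, Finset.sum_congr rfl hP, Finset.sum_const, Finset.sum_const,
      hUcard, hPcard, nsmul_eq_mul, nsmul_eq_mul, h0]
    have : ((lam - mu - 1 : ℕ) : ℤ) = (lam : ℤ) - mu - 1 := by omega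
    rw [this]
    ring
  constructor
  · rw [← sub_eq_zero]
    apply vanish_zero 0
    intro k m
    have e1 : ((m : ℤ) + 2 * k + 0) = ((m + 2 * k : ℕ) : ℤ) := by push_cast; ring
    rw [e1, map_sub, sub_eq_zero, keyEven (m + 2 * k) m (by omega)
      (by rw [Nat.even_iff]; omega), map_add, map_mul, map_mul, eval_bind_pts, eval_bind_pts]
    simp only [map_sub, map_add, map_one, MvPolynomial.eval_X, Matrix.cons_val_zero,
      Matrix.cons_val_one, Matrix.head_cons]
  · rw [← sub_eq_zero]
    apply vanish_zero 1
    intro k m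
    have e1 : ((m : ℤ) + 2 * k + 1) = ((m + 2 * k + 1 : ℕ) : ℤ) := by push_cast; ring
    rw [e1, map_sub, sub_eq_zero, keyOdd (m + 2 * k + 1) m (by omega)
      (by rw [Nat.not_even_iff]; omega), map_add, map_add, map_mul, map_mul,
      eval_bind_pts, eval_bind_pts, eval_bind_pts]
    simp only [map_sub, map_add, map_one, MvPolynomial.eval_X, Matrix.cons_val_zero,
      Matrix.cons_val_one, Matrix.head_cons]
end

section
/- Let Σ be a signed graph and let v be a negative dominating vertex of Σ, i.e. v is joined by a negative edge to every other vertex of Σ. Let p, q ∈ ℤ[x,y] be the even and odd bivariate chromatic polynomials of Σ (so p(λ, μ) = f(Σ, λ, μ) for all integers λ ≥ μ ≥ 0 with λ−μ even and q(λ, μ) = f(Σ, λ, μ) for all integers λ ≥ μ ≥ 0 with λ−μ odd), and let p′, q′ be those of the signed graph Σ∖v obtained by deleting v and all edges incident with v. Then p(x, y) = y·p′(x, y) + (x−y)·p′(x−1, y+1) and q(x, y) = y·q′(x, y) + (x−y−1)·q′(x−1, y+1) + p′(x−1, y), where p′(x−1, y+1) denotes the polynomial obtained by substituting x−1 for x and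 y+1 for y. -/
open Finset

namespace SignedPaper

open MvPolynomial Polynomial in
lemma grid_zero (c : ℕ) (r : MvPolynomial (Fin 2) ℤ)
    (h : ∀ b k : ℕ, MvPolynomial.eval ![((b + 2*k + c : ℕ) : ℤ), (b : ℤ)] r = 0) : r = 0 := by
  classical
  set ψ : MvPolynomial (Fin 2) ℤ →ₐ[ℤ] Polynomial (Polynomial ℤ) :=
    MvPolynomial.aeval ![(Polynomial.C Polynomial.X : Polynomial (Polynomial ℤ)), Polynomial.X]
    with hψ
  have key : ∀ (s : MvPolynomial (Fin 2) ℤ) (a b : ℤ), MvPolynomial.eval ![a, b] s =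
      Polynomial.eval a (Polynomial.eval (Polynomial.C b) (ψ s)) := by
    intro s a b
    induction s using MvPolynomial.induction_on with
    | C z => simp [hψ]
    | add p q hp hq => simp [map_add, hp, hq]
    | mul_X p i hp =>
      fin_cases i <;> simp [hψ, map_mul, hp]
  have hF : ψ r = 0 := by
    apply Polynomial.eq_zero_of_infinite_isRoot
    apply Set.Infinite.mono (s := Set.range (fun b : ℕ => (Polynomial.C (b : ℤ) : Polynomial ℤ)))
    · rintro _ ⟨b, rfl⟩
      have hg : Polynomial.eval (Polynomial.C (b : ℤ)) (ψ r) = 0 := by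
        apply Polynomial.eq_zero_of_infinite_isRoot
        apply Set.Infinite.mono (s := Set.range (fun k : ℕ => ((b + 2*k + c : ℕ) : ℤ)))
        · rintro _ ⟨k, rfl⟩
          simp only [Set.mem_setOf_eq, Polynomial.IsRoot, ← key r]
          exact h b k
        · apply Set.infinite_range_of_injective
          intro k l hkl
          simp only [Nat.cast_inj] at hkl
          omega
      exact hg
    · apply Set.infinite_range_of_injective
      intro k l hkl
      have := Polynomial.C_injective hkl
      exact_mod_cast this
  have : ∀ x : Fin 2 → ℤ, MvPolynomial.eval x r = MvPolynomial.eval x 0 := by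
    intro x
    have hx : x = ![x 0, x 1] := by
      funext i; fin_cases i <;> rfl
    rw [hx, key r, hF]
    simp
  exact MvPolynomial.funext this

lemma properColourings_finite {V : Type*} [Fintype V] (G : SimpleGraph V) (σ : Sym2 V → ℤ)
    (C : Finset ℤ) : (ProperColourings G σ C).Finite := by
  apply Set.Finite.subset (Set.Finite.pi (fun _ : V => C.finite_toSet))
  intro κ hκ
  simp only [Set.mem_pi, Set.mem_univ, forall_true_left]
  exact fun i => hκ.1 i

lemma ncard_sigma {α : Type*} (s : Finset ℤ) (A : ℤ → Set α) (hA : ∀ c, (A c).Finite) :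
    (⋃ c ∈ s, ({c} : Set ℤ) ×ˢ A c).ncard = ∑ c ∈ s, (A c).ncard := by
  classical
  induction s using Finset.induction_on with
  | empty => simp
  | insert a s ha ih =>
    have hdisj : Disjoint (({a} : Set ℤ) ×ˢ A a) (⋃ c ∈ s, ({c} : Set ℤ) ×ˢ A c) := by
      rw [Set.disjoint_left]
      rintro ⟨x1, x2⟩ hx hx'
      simp only [Set.mem_prod, Set.mem_singleton_iff] at hx
      simp only [Set.mem_iUnion, Set.mem_prod, Set.mem_singleton_iff] at hx'
      obtain ⟨i, hi, hxi, _⟩ := hx'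
      rw [← hxi, hx.1] at hi
      exact ha hi
    have h1 : (({a} : Set ℤ) ×ˢ A a).Finite := (Set.finite_singleton a).prod (hA a)
    have h2 : (⋃ c ∈ s, ({c} : Set ℤ) ×ˢ A c).Finite :=
      Set.Finite.biUnion (s.finite_toSet) fun c _ => (Set.finite_singleton c).prod (hA c)
    rw [Finset.set_biUnion_insert, Set.ncard_union_eq hdisj h1 h2, Finset.sum_insert ha, ← ih]
    congr 1
    rw [Set.singleton_prod, Set.ncard_image_of_injective _ (Prod.mk_right_injective a)]

lemma count_split {V : Type*} [Fintype V] (G : SimpleGraph V) (σ : Sym2 V → ℤ)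
    (v : V) (hv : ∀ w : V, w ≠ v → G.Adj v w ∧ σ s(v, w) = -1) (C : Finset ℤ) :
    properCount G σ C =
      ∑ c ∈ C, properCount (G.comap (Subtype.val : {w : V // w ≠ v} → V))
        (fun e => σ (e.map Subtype.val)) (C.erase (-c)) := by
  classical
  set G' := G.comap (Subtype.val : {w : V // w ≠ v} → V) with hG'
  set σ' : Sym2 {w : V // w ≠ v} → ℤ := fun e => σ (e.map Subtype.val) with hσ'
  set e := Equiv.funSplitAt v ℤ with he
  have himg : e '' ProperColourings G σ C =
      ⋃ c ∈ C, ({c} : Set ℤ) ×ˢ ProperColourings G' σ' (C.erase (-c)) := by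
    ext x
    obtain ⟨c, κ'⟩ := x
    simp only [Set.mem_image, Set.mem_iUnion, Set.mem_prod, Set.mem_singleton_iff, exists_prop]
    constructor
    · rintro ⟨κ, ⟨hmem, hadj⟩, hκ⟩
      have hκ1 : κ v = c := congrArg Prod.fst hκ
      have hκ2 : ∀ w : {w : V // w ≠ v}, κ' w = κ w := by
        intro w
        exact (congrFun (congrArg Prod.snd hκ) w).symm
      have hne : ∀ w : {w : V // w ≠ v}, κ w ≠ -c := by
        intro w hw
        have hadj' := hadj (w : V) v ((hv w w.2).1.symm)
        rw [Sym2.eq_swap, (hv w w.2).2, hκ1, hw] at hadj'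
        exact hadj' (by ring)
      refine ⟨c, hκ1 ▸ hmem v, rfl, ?_, ?_⟩
      · intro w
        rw [Finset.mem_erase, hκ2]
        exact ⟨hne w, hmem w⟩
      · intro a b hab
        rw [hκ2, hκ2]
        have : σ' s(a, b) = σ s((a : V), (b : V)) := by
          simp [hσ', Sym2.map_pair_eq]
        rw [this]
        exact hadj a b hab
    · rintro ⟨c', hc, hceq, hκ'⟩
      subst hceq
      refine ⟨e.symm (c, κ'), ?_, e.apply_symm_apply _⟩
      set κ := e.symm (c, κ') with hκdef
      have hκ1 : κ v = c := congrArg Prod.fst (e.apply_symm_apply (c, κ'))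
      have hκ2 : ∀ (w : V) (hw : w ≠ v), κ w = κ' ⟨w, hw⟩ := by
        intro w hw
        exact congrFun (congrArg Prod.snd (e.apply_symm_apply (c, κ'))) ⟨w, hw⟩
      obtain ⟨hmem', hadj'⟩ := hκ'
      have hval : ∀ w : V, κ w ∈ C := by
        intro w
        by_cases hw : w = v
        · rw [hw, hκ1]; exact hc
        · rw [hκ2 w hw]; exact Finset.mem_of_mem_erase (hmem' ⟨w, hw⟩)
      have hnotneg : ∀ (w : V) (hw : w ≠ v), κ w ≠ -c := by
        intro w hw
        rw [hκ2 w hw]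
        exact (Finset.mem_erase.mp (hmem' ⟨w, hw⟩)).1
      refine ⟨hval, ?_⟩
      intro a b hab
      by_cases hav : a = v
      · subst hav
        have hbv : b ≠ a := (G.ne_of_adj hab).symm
        rw [hκ1, (hv b hbv).2]
        intro hcontra
        exact hnotneg b hbv (by rw [hκ2 b hbv] at hcontra ⊢; linarith)
      · by_cases hbv : b = v
        · subst hbv
          rw [Sym2.eq_swap, (hv a hav).2, hκ1]
          have := hnotneg a hav
          intro hcontra
          exact this (by linarith)
        · rw [hκ2 a hav, hκ2 b hbv]
          have : σ s(a, b) = σ' s((⟨a, hav⟩ : {w : V // w ≠ v}), ⟨b, hbv⟩) := by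
            simp [hσ', Sym2.map_pair_eq]
          rw [this]
          exact hadj' ⟨a, hav⟩ ⟨b, hbv⟩ hab
  have := Set.ncard_image_of_injective (ProperColourings G σ C) e.injective
  rw [himg] at this
  rw [properCount, ← this, ncard_sigma]
  · rfl
  · intro c
    exact properColourings_finite G' σ' _

lemma build (lam mu : ℕ) :
    ∃ P U : Finset ℤ,
      (0:ℤ) ∉ P ∧ (0:ℤ) ∉ U ∧ Disjoint P U ∧ (∀ x ∈ P, -x ∈ P) ∧
      U.card = mu ∧ (∀ x ∈ U, -x ∉ U) ∧ P.card = 2 * ((lam - mu) / 2) := by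
  classical
  set h : ℕ := (lam - mu) / 2 with hh
  refine ⟨Finset.Icc ((mu:ℤ)+1) (mu+h) ∪ Finset.Icc (-((mu:ℤ)+h)) (-((mu:ℤ)+1)),
    Finset.Icc (1:ℤ) mu, ?_, ?_, ?_, ?_, ?_, ?_, ?_⟩
  · simp only [Finset.mem_union, Finset.mem_Icc]
    omega
  · simp only [Finset.mem_Icc]; omega
  · rw [Finset.disjoint_left]
    intro x hx hx'
    simp only [Finset.mem_union, Finset.mem_Icc] at hx hx'
    omega
  · intro x hx
    simp only [Finset.mem_union, Finset.mem_Icc] at hx ⊢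
    omega
  · rw [Int.card_Icc]
    simp
  · intro x hx hx'
    simp only [Finset.mem_Icc] at hx hx'
    omega
  · rw [Finset.card_union_of_disjoint, Int.card_Icc, Int.card_Icc]
    · omega
    · rw [Finset.disjoint_left]
      intro x hx hx'
      simp only [Finset.mem_Icc] at hx hx'
      omega

lemma erase_of_mem_P {P U : Finset ℤ} (h0P : (0:ℤ) ∉ P) (h0U : (0:ℤ) ∉ U)
    (hd : Disjoint P U) (hsym : ∀ x ∈ P, -x ∈ P) (hU : ∀ x ∈ U, -x ∉ U)
    {c : ℤ} (hc : c ∈ P) :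
    ∃ P₂ U₂ : Finset ℤ, (0:ℤ) ∉ P₂ ∧ (0:ℤ) ∉ U₂ ∧ Disjoint P₂ U₂ ∧ (∀ x ∈ P₂, -x ∈ P₂) ∧
      U₂.card = U.card + 1 ∧ (∀ x ∈ U₂, -x ∉ U₂) ∧ P₂.card = P.card - 2 ∧
      (P ∪ U).erase (-c) = P₂ ∪ U₂ ∧ (P ∪ U ∪ {0}).erase (-c) = P₂ ∪ U₂ ∪ {0} := by
  classical
  have hc0 : c ≠ 0 := fun h => h0P (h ▸ hc)
  have hnc : -c ∈ P := hsym c hc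
  have hcnc : c ≠ -c := fun h => hc0 (by omega)
  have hcU : c ∉ U := Finset.disjoint_left.mp hd hc
  have hncU : -c ∉ U := Finset.disjoint_left.mp hd hnc
  refine ⟨(P.erase c).erase (-c), insert c U, ?_, ?_, ?_, ?_, ?_, ?_, ?_, ?_, ?_⟩
  · intro h; exact h0P (Finset.mem_of_mem_erase (Finset.mem_of_mem_erase h))
  · simp only [Finset.mem_insert]
    push_neg
    exact ⟨fun h => hc0 h.symm, h0U⟩
  · rw [Finset.disjoint_left]
    intro x hx hx'
    simp only [Finset.mem_erase, Finset.mem_insert] at hx hx'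
    rcases hx' with rfl | hx'
    · exact hx.2.1 rfl
    · exact Finset.disjoint_left.mp hd hx.2.2 hx'
  · intro x hx
    simp only [Finset.mem_erase] at hx ⊢
    refine ⟨fun h => hx.2.1 (by omega), fun h => hx.1 (by omega), hsym x hx.2.2⟩
  · rw [Finset.card_insert_of_notMem hcU]
  · intro x hx hx'
    simp only [Finset.mem_insert] at hx hx'
    rcases hx with rfl | hx
    · rcases hx' with h | h
      · exact hcnc h.symm
      · exact hncU h
    · rcases hx' with h | h
      · exact (Finset.disjoint_left.mp hd (by rw [show x = -c by omega]; exact hnc) hx).elim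
      · exact hU x hx h
  · have hm : -c ∈ P.erase c := Finset.mem_erase.mpr ⟨fun h => hcnc h.symm, hnc⟩
    rw [Finset.card_erase_of_mem hm, Finset.card_erase_of_mem hc]
    omega
  · ext x
    simp only [Finset.mem_erase, Finset.mem_union, Finset.mem_insert]
    constructor
    · rintro ⟨hne, hP | hU'⟩
      · by_cases hxc : x = c
        · exact Or.inr (Or.inl hxc)
        · exact Or.inl ⟨hne, hxc, hP⟩
      · exact Or.inr (Or.inr hU')
    · rintro (⟨h1, h2, h3⟩ | rfl | hU')
      · exact ⟨h1, Or.inl h3⟩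
      · exact ⟨hcnc, Or.inl hc⟩
      · exact ⟨fun h => hncU (h ▸ hU'), Or.inr hU'⟩
  · ext x
    simp only [Finset.mem_erase, Finset.mem_union, Finset.mem_insert, Finset.mem_singleton]
    have hnc0 : -c ≠ 0 := by omega
    constructor
    · rintro ⟨hne, (hP | hU') | h0⟩
      · by_cases hxc : x = c
        · exact Or.inl (Or.inr (Or.inl hxc))
        · exact Or.inl (Or.inl ⟨hne, hxc, hP⟩)
      · exact Or.inl (Or.inr (Or.inr hU'))
      · exact Or.inr h0
    · rintro ((⟨h1, h2, h3⟩ | rfl | hU') | rfl)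
      · exact ⟨h1, Or.inl (Or.inl h3)⟩
      · exact ⟨hcnc, Or.inl (Or.inl hc)⟩
      · exact ⟨fun h => hncU (h ▸ hU'), Or.inl (Or.inr hU')⟩
      · exact ⟨hnc0.symm, Or.inr rfl⟩

lemma neg_not_mem_of_mem_U {P U : Finset ℤ} (h0U : (0:ℤ) ∉ U)
    (hd : Disjoint P U) (hsym : ∀ x ∈ P, -x ∈ P) (hU : ∀ x ∈ U, -x ∉ U)
    {c : ℤ} (hc : c ∈ U) : -c ∉ P ∪ U ∧ -c ≠ 0 := by
  constructor
  · simp only [Finset.mem_union]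
    push_neg
    refine ⟨fun h => ?_, hU c hc⟩
    have := hsym _ h
    rw [neg_neg] at this
    exact Finset.disjoint_left.mp hd this hc
  · intro h
    have : c = 0 := by omega
    exact h0U (this ▸ hc)

lemma eval_bind' (x : Fin 2 → ℤ) (g : Fin 2 → MvPolynomial (Fin 2) ℤ)
    (p : MvPolynomial (Fin 2) ℤ) :
    MvPolynomial.eval x (MvPolynomial.bind₁ g p) =
      MvPolynomial.eval (fun i => MvPolynomial.eval x (g i)) p := by
  simpa using MvPolynomial.aeval_bind₁ (R := ℤ) x g p

end SignedPaper


open SignedPaper MvPolynomial in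
/-- deletion formulae for a negative dominating vertex, for the even and
odd bivariate chromatic polynomials (variable `0` is `x`, variable `1` is `y`). -/
theorem stmt_16 {V : Type*} [Fintype V] (G : SimpleGraph V) (σ : Sym2 V → ℤ)
    (hσ : ∀ e ∈ G.edgeSet, σ e = 1 ∨ σ e = -1)
    (v : V) (hv : ∀ w : V, w ≠ v → G.Adj v w ∧ σ s(v, w) = -1)
    (p q p' q' : MvPolynomial (Fin 2) ℤ)
    (hp : ∀ lam mu : ℕ, mu ≤ lam → Even (lam - mu) → ∀ C : Finset ℤ,
      IsColourSet lam mu C →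
        MvPolynomial.eval ![(lam : ℤ), (mu : ℤ)] p = properCount G σ C)
    (hq : ∀ lam mu : ℕ, mu ≤ lam → ¬ Even (lam - mu) → ∀ C : Finset ℤ,
      IsColourSet lam mu C →
        MvPolynomial.eval ![(lam : ℤ), (mu : ℤ)] q = properCount G σ C)
    (hp' : ∀ lam mu : ℕ, mu ≤ lam → Even (lam - mu) → ∀ C : Finset ℤ,
      IsColourSet lam mu C →
        MvPolynomial.eval ![(lam : ℤ), (mu : ℤ)] p' =
          properCount (G.comap (Subtype.val : {w : V // w ≠ v} → V))
            (fun e => σ (e.map Subtype.val)) C)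
    (hq' : ∀ lam mu : ℕ, mu ≤ lam → ¬ Even (lam - mu) → ∀ C : Finset ℤ,
      IsColourSet lam mu C →
        MvPolynomial.eval ![(lam : ℤ), (mu : ℤ)] q' =
          properCount (G.comap (Subtype.val : {w : V // w ≠ v} → V))
            (fun e => σ (e.map Subtype.val)) C) :
    p = X 1 * p' + (X 0 - X 1) * MvPolynomial.bind₁ ![X 0 - 1, X 1 + 1] p' ∧
    q = X 1 * q' + (X 0 - X 1 - 1) * MvPolynomial.bind₁ ![X 0 - 1, X 1 + 1] q' +
        MvPolynomial.bind₁ ![X 0 - 1, X 1] p' := by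
  classical
  constructor
  · -- even formula
    rw [← sub_eq_zero]
    apply grid_zero 0
    intro b k
    set lam : ℕ := b + 2 * k + 0 with hlam
    set mu : ℕ := b with hmu
    have hml : mu ≤ lam := by omega
    have hev : Even (lam - mu) := by rw [Nat.even_iff]; omega
    obtain ⟨P, U, h0P, h0U, hd, hsym, hUcard, hUneg, hPcard⟩ := build lam mu
    have hPcard' : P.card = lam - mu := by omega
    have hCS : IsColourSet lam mu (P ∪ U) :=
      ⟨P, U, h0P, h0U, hd, hsym, hUcard, hUneg, Or.inl ⟨hev, hPcard', rfl⟩⟩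
    have heval_p := hp lam mu hml hev (P ∪ U) hCS
    have hA := hp' lam mu hml hev (P ∪ U) hCS
    have hsplit := count_split G σ v hv (P ∪ U)
    have hUval : ∀ c ∈ U,
        (properCount (G.comap (Subtype.val : {w : V // w ≠ v} → V))
          (fun e => σ (e.map Subtype.val)) ((P ∪ U).erase (-c)) : ℤ) =
        MvPolynomial.eval ![(lam : ℤ), (mu : ℤ)] p' := by
      intro c hc
      rw [Finset.erase_eq_of_notMem (neg_not_mem_of_mem_U h0U hd hsym hUneg hc).1, ← hA]
    have hPval : ∀ c ∈ P,
        (properCount (G.comap (Subtype.val : {w : V // w ≠ v} → V))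
          (fun e => σ (e.map Subtype.val)) ((P ∪ U).erase (-c)) : ℤ) =
        MvPolynomial.eval ![(lam : ℤ) - 1, (mu : ℤ) + 1] p' := by
      intro c hc
      have hk : 1 ≤ k := by
        have := Finset.card_pos.mpr ⟨c, hc⟩
        omega
      obtain ⟨P₂, U₂, h0P₂, h0U₂, hd₂, hsym₂, hU₂card, hU₂neg, hP₂card, hE1, hE2⟩ :=
        erase_of_mem_P h0P h0U hd hsym hUneg hc
      have hev₂ : Even ((lam - 1) - (mu + 1)) := by rw [Nat.even_iff]; omega
      have hCS₂ : IsColourSet (lam - 1) (mu + 1) ((P ∪ U).erase (-c)) :=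
        ⟨P₂, U₂, h0P₂, h0U₂, hd₂, hsym₂, by omega, hU₂neg,
          Or.inl ⟨hev₂, by omega, hE1⟩⟩
      have hval := hp' (lam - 1) (mu + 1) (by omega) hev₂ _ hCS₂
      have hc1 : ((lam - 1 : ℕ) : ℤ) = (lam : ℤ) - 1 := by omega
      have hc2 : ((mu + 1 : ℕ) : ℤ) = (mu : ℤ) + 1 := by push_cast; ring
      rw [← hval, hc1, hc2]
    have hbind : MvPolynomial.eval ![(lam : ℤ), (mu : ℤ)]
        (MvPolynomial.bind₁ ![X 0 - 1, X 1 + 1] p') =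
        MvPolynomial.eval ![(lam : ℤ) - 1, (mu : ℤ) + 1] p' := by
      rw [eval_bind']
      have hfn : (fun i => MvPolynomial.eval ![(lam : ℤ), (mu : ℤ)] (![X 0 - 1, X 1 + 1] i)) =
          ![(lam : ℤ) - 1, (mu : ℤ) + 1] := by
        funext i
        fin_cases i <;> simp
      rw [hfn]
    simp only [map_sub, map_add, map_mul, MvPolynomial.eval_X, Matrix.cons_val_zero,
      Matrix.cons_val_one, Matrix.head_cons, hbind, heval_p]
    rw [hsplit, Nat.cast_sum, Finset.sum_union hd, Finset.sum_congr rfl hUval,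
      Finset.sum_congr rfl hPval, Finset.sum_const, Finset.sum_const, hUcard,
      nsmul_eq_mul, nsmul_eq_mul]
    have hPc : (P.card : ℤ) = (lam : ℤ) - (mu : ℤ) := by omega
    rw [hPc]
    ring
  · -- odd formula
    rw [← sub_eq_zero]
    apply grid_zero 1
    intro b k
    set lam : ℕ := b + 2 * k + 1 with hlam
    set mu : ℕ := b with hmu
    have hml : mu ≤ lam := by omega
    have hodd : ¬ Even (lam - mu) := by rw [Nat.even_iff]; omega
    obtain ⟨P, U, h0P, h0U, hd, hsym, hUcard, hUneg, hPcard⟩ := build lam mu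
    have hPcard' : P.card = lam - mu - 1 := by omega
    have hd0 : Disjoint (P ∪ U) ({0} : Finset ℤ) := by
      simp only [Finset.disjoint_singleton_right, Finset.mem_union]
      push_neg
      exact ⟨h0P, h0U⟩
    have hCS : IsColourSet lam mu (P ∪ U ∪ {0}) :=
      ⟨P, U, h0P, h0U, hd, hsym, hUcard, hUneg, Or.inr ⟨hodd, hPcard', rfl⟩⟩
    have heval_q := hq lam mu hml hodd (P ∪ U ∪ {0}) hCS
    have hA := hq' lam mu hml hodd (P ∪ U ∪ {0}) hCS
    have hsplit := count_split G σ v hv (P ∪ U ∪ {0})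
    have h00 : (P ∪ U ∪ {0} : Finset ℤ).erase 0 = P ∪ U := by
      ext x
      simp only [Finset.mem_erase, Finset.mem_union, Finset.mem_singleton]
      constructor
      · rintro ⟨hne, (h | h) | h0⟩
        exacts [Or.inl h, Or.inr h, absurd h0 hne]
      · rintro (h | h)
        · exact ⟨fun h0 => h0P (h0 ▸ h), Or.inl (Or.inl h)⟩
        · exact ⟨fun h0 => h0U (h0 ▸ h), Or.inl (Or.inr h)⟩
    have hUval : ∀ c ∈ U,
        (properCount (G.comap (Subtype.val : {w : V // w ≠ v} → V))
          (fun e => σ (e.map Subtype.val)) ((P ∪ U ∪ {0}).erase (-c)) : ℤ) =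
        MvPolynomial.eval ![(lam : ℤ), (mu : ℤ)] q' := by
      intro c hc
      obtain ⟨hn1, hn2⟩ := neg_not_mem_of_mem_U h0U hd hsym hUneg hc
      have hnot : -c ∉ P ∪ U ∪ {0} := by
        simp only [Finset.mem_union, Finset.mem_singleton] at hn1 ⊢
        push_neg at hn1 ⊢
        exact ⟨hn1, hn2⟩
      rw [Finset.erase_eq_of_notMem hnot, ← hA]
    have hPval : ∀ c ∈ P,
        (properCount (G.comap (Subtype.val : {w : V // w ≠ v} → V))
          (fun e => σ (e.map Subtype.val)) ((P ∪ U ∪ {0}).erase (-c)) : ℤ) =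
        MvPolynomial.eval ![(lam : ℤ) - 1, (mu : ℤ) + 1] q' := by
      intro c hc
      have hk : 1 ≤ k := by
        have := Finset.card_pos.mpr ⟨c, hc⟩
        omega
      obtain ⟨P₂, U₂, h0P₂, h0U₂, hd₂, hsym₂, hU₂card, hU₂neg, hP₂card, hE1, hE2⟩ :=
        erase_of_mem_P h0P h0U hd hsym hUneg hc
      have hodd₂ : ¬ Even ((lam - 1) - (mu + 1)) := by rw [Nat.even_iff]; omega
      have hCS₂ : IsColourSet (lam - 1) (mu + 1) ((P ∪ U ∪ {0}).erase (-c)) :=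
        ⟨P₂, U₂, h0P₂, h0U₂, hd₂, hsym₂, by omega, hU₂neg,
          Or.inr ⟨hodd₂, by omega, hE2⟩⟩
      have hval := hq' (lam - 1) (mu + 1) (by omega) hodd₂ _ hCS₂
      have hc1 : ((lam - 1 : ℕ) : ℤ) = (lam : ℤ) - 1 := by omega
      have hc2 : ((mu + 1 : ℕ) : ℤ) = (mu : ℤ) + 1 := by push_cast; ring
      rw [← hval, hc1, hc2]
    have h0val :
        (properCount (G.comap (Subtype.val : {w : V // w ≠ v} → V))
          (fun e => σ (e.map Subtype.val)) ((P ∪ U ∪ {0}).erase (-0)) : ℤ) =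
        MvPolynomial.eval ![(lam : ℤ) - 1, (mu : ℤ)] p' := by
      have hev₃ : Even ((lam - 1) - mu) := by rw [Nat.even_iff]; omega
      have hCS₃ : IsColourSet (lam - 1) mu (P ∪ U) :=
        ⟨P, U, h0P, h0U, hd, hsym, hUcard, hUneg, Or.inl ⟨hev₃, by omega, rfl⟩⟩
      have hval := hp' (lam - 1) mu (by omega) hev₃ _ hCS₃
      have hc1 : ((lam - 1 : ℕ) : ℤ) = (lam : ℤ) - 1 := by omega
      rw [neg_zero, h00, ← hval, hc1]
    have hbind1 : MvPolynomial.eval ![(lam : ℤ), (mu : ℤ)]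
        (MvPolynomial.bind₁ ![X 0 - 1, X 1 + 1] q') =
        MvPolynomial.eval ![(lam : ℤ) - 1, (mu : ℤ) + 1] q' := by
      rw [eval_bind']
      have hfn : (fun i => MvPolynomial.eval ![(lam : ℤ), (mu : ℤ)] (![X 0 - 1, X 1 + 1] i)) =
          ![(lam : ℤ) - 1, (mu : ℤ) + 1] := by
        funext i
        fin_cases i <;> simp
      rw [hfn]
    have hbind2 : MvPolynomial.eval ![(lam : ℤ), (mu : ℤ)]
        (MvPolynomial.bind₁ ![X 0 - 1, X 1] p') =
        MvPolynomial.eval ![(lam : ℤ) - 1, (mu : ℤ)] p' := by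
      rw [eval_bind']
      have hfn : (fun i => MvPolynomial.eval ![(lam : ℤ), (mu : ℤ)] (![X 0 - 1, X 1] i)) =
          ![(lam : ℤ) - 1, (mu : ℤ)] := by
        funext i
        fin_cases i <;> simp
      rw [hfn]
    simp only [map_sub, map_add, map_mul, map_one, MvPolynomial.eval_X, Matrix.cons_val_zero,
      Matrix.cons_val_one, Matrix.head_cons, hbind1, hbind2, heval_q]
    rw [hsplit, Nat.cast_sum, Finset.sum_union hd0, Finset.sum_union hd,
      Finset.sum_congr rfl hUval, Finset.sum_congr rfl hPval, Finset.sum_singleton,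
      h0val, Finset.sum_const, Finset.sum_const, hUcard, nsmul_eq_mul, nsmul_eq_mul]
    have hPc : (P.card : ℤ) = (lam : ℤ) - (mu : ℤ) - 1 := by omega
    rw [hPc]
    ring
end

section
/- Let n ≥ 0 be an integer and let a, b ∈ {0,1}ⁿ ∪ {−1,1}ⁿ. Then the following are equivalent: (i) a = b; (ii) the signed threshold graphs T_a and T_b are isomorphic as signed graphs; (iii) for all integers λ ≥ μ ≥ 0 with λ−μ even and every (λ, μ)-colour set C, the number of proper C-colourings of T_a equals the number of proper C-colourings of T_b. -/
open Finset

namespace SignedPaper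

/-- Auxiliary value: `a (k-1)` when `0 < k ≤ n`, and `0` otherwise. -/
def thrVal {n : ℕ} (a : Fin n → ℤ) (k : ℕ) : ℤ :=
  if h : 0 < k ∧ k ≤ n then a ⟨k - 1, by omega⟩ else 0

/-- The sign/adjacency value between two vertices of the signed threshold graph `T_a`:
the entry of `a` indexed by the later-added of the two vertices. -/
def thresholdVal {n : ℕ} (a : Fin n → ℤ) (v w : Fin (n + 1)) : ℤ :=
  thrVal a (max v.val w.val)

lemma thresholdVal_comm {n : ℕ} (a : Fin n → ℤ) (v w : Fin (n + 1)) :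
    thresholdVal a v w = thresholdVal a w v := by
  unfold thresholdVal; rw [Nat.max_comm]

/-- The underlying graph of the signed threshold graph `T_a`: vertex `0` is the initial
`K₁`, and vertex `i` (for `1 ≤ i ≤ n`) is the vertex added at step `i`: isolated at the
time of addition if `a i = 0`, and joined to all previous vertices otherwise. -/
def thresholdGraph {n : ℕ} (a : Fin n → ℤ) : SimpleGraph (Fin (n + 1)) where
  Adj v w := v ≠ w ∧ thresholdVal a v w ≠ 0
  symm := ⟨fun v w h => ⟨h.1.symm, by rw [thresholdVal_comm]; exact h.2⟩⟩
  loopless := ⟨fun v h => h.1 rfl⟩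

/-- The signature of the signed threshold graph `T_a`: the edge `{v, w}` is signed by
the entry of `a` indexed by the later-added endpoint. -/
def thresholdSign {n : ℕ} (a : Fin n → ℤ) : Sym2 (Fin (n + 1)) → ℤ :=
  Sym2.lift ⟨thresholdVal a, thresholdVal_comm a⟩

end SignedPaper

namespace SignedPaper

section Aux

open Polynomial Finset

/-! #### Polynomial root extraction -/

lemma aux_poly_eq {k : ℕ} (s t : Fin k → ℕ) (N : ℕ)
    (h : ∀ m : ℕ, N ≤ m → ∏ j, ((m : ℤ) - s j) = ∏ j, ((m : ℤ) - t j)) :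
    (∏ j, (X - Polynomial.C (s j : ℤ))) = ∏ j, (X - Polynomial.C (t j : ℤ)) := by
  have hroots : {x : ℤ |
      ((∏ j, (X - Polynomial.C (s j : ℤ))) - ∏ j, (X - Polynomial.C (t j : ℤ))).IsRoot x}.Infinite := by
    apply Set.infinite_of_injective_forall_mem (f := fun m : ℕ => ((N + m : ℕ) : ℤ))
    · intro x y hxy
      simp only at hxy
      omega
    · intro m
      simp only [Set.mem_setOf_eq, IsRoot.def, eval_sub, eval_prod, eval_X, eval_C]
      have := h (N + m) (Nat.le_add_right _ _)
      omega
  have h0 := Polynomial.eq_zero_of_infinite_isRoot _ hroots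
  have := sub_eq_zero.mp h0
  exact this

lemma aux_sorted : ∀ (k : ℕ) (s t : Fin k → ℕ), Antitone s → Antitone t →
    ((∏ j, (X - Polynomial.C (s j : ℤ))) = ∏ j, (X - Polynomial.C (t j : ℤ))) → s = t := by
  intro k
  induction k with
  | zero => intro s t _ _ _; funext j; exact j.elim0
  | succ k ih =>
    intro s t hs ht hp
    have key : ∀ (u v : Fin (k+1) → ℕ),
        ((∏ j, (X - Polynomial.C (u j : ℤ))) = ∏ j, (X - Polynomial.C (v j : ℤ))) →
        Antitone v → u 0 ≤ v 0 := by
      intro u v hpe hv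
      have e1 : (0 : ℤ) = ∏ j, ((u 0 : ℤ) - v j) := by
        have := congrArg (Polynomial.eval ((u 0 : ℤ))) hpe
        simp only [eval_prod, eval_sub, eval_X, eval_C] at this
        rw [← this]
        exact (Finset.prod_eq_zero (Finset.mem_univ 0) (by ring)).symm
      obtain ⟨j, -, hj⟩ := Finset.prod_eq_zero_iff.mp e1.symm
      have hj' : v j = u 0 := by omega
      have := hv (Fin.zero_le j)
      omega
    have hst : s 0 = t 0 := le_antisymm (key s t hp ht) (key t s hp.symm hs)
    have hcancel : (∏ j : Fin k, (X - Polynomial.C ((s j.succ : ℕ) : ℤ)))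
        = ∏ j : Fin k, (X - Polynomial.C ((t j.succ : ℕ) : ℤ)) := by
      rw [Fin.prod_univ_succ, Fin.prod_univ_succ, hst] at hp
      exact mul_left_cancel₀ (Polynomial.X_sub_C_ne_zero _) hp
    have hmono : Monotone (Fin.succ : Fin k → Fin (k+1)) := fun x y h => by
      simp only [Fin.le_def, Fin.val_succ] at h ⊢; omega
    have htail := ih (s ∘ Fin.succ) (t ∘ Fin.succ) (hs.comp_monotone hmono) (ht.comp_monotone hmono) hcancel
    funext j
    cases j using Fin.cases with
    | zero => exact hst
    | succ j => exact congrFun htail j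

/-! #### Finset version of the colouring count -/

instance thresholdGraph.adjDecidable {n : ℕ} (a : Fin n → ℤ) :
    DecidableRel (thresholdGraph a).Adj :=
  fun v w => decidable_of_iff (v ≠ w ∧ thresholdVal a v w ≠ 0) Iff.rfl

def properFinset {N : ℕ} (G : SimpleGraph (Fin N)) [DecidableRel G.Adj]
    (σ : Sym2 (Fin N) → ℤ) (C : Finset ℤ) : Finset (Fin N → ℤ) :=
  (Fintype.piFinset fun _ => C).filter fun κ => ∀ v w, G.Adj v w → κ v ≠ σ s(v, w) * κ w

lemma properCount_eq {N : ℕ} (G : SimpleGraph (Fin N)) [DecidableRel G.Adj]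
    (σ : Sym2 (Fin N) → ℤ) (C : Finset ℤ) :
    properCount G σ C = (properFinset G σ C).card := by
  rw [properCount, ← Set.ncard_coe_finset]
  congr 1
  ext κ
  simp [ProperColourings, properFinset, Fintype.mem_piFinset]

/-! #### thresholdVal computations -/

lemma thresholdSign_mk {n : ℕ} (a : Fin n → ℤ) (v w : Fin (n+1)) :
    thresholdSign a s(v, w) = thresholdVal a v w := rfl

lemma thrVal_succ {n : ℕ} (a : Fin n → ℤ) (i : Fin n) : thrVal a (i.val + 1) = a i := by
  rw [thrVal, dif_pos ⟨Nat.succ_pos _, i.isLt⟩]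
  exact congrArg a (Fin.ext (by simp))

lemma thresholdVal_zero_succ {n : ℕ} (a : Fin n → ℤ) (i : Fin n) :
    thresholdVal a (0 : Fin (n+1)) i.succ = a i := by
  simp only [thresholdVal]
  rw [show max ((0 : Fin (n+1)) : ℕ) ((i.succ : Fin (n+1)) : ℕ) = i.val + 1 by
    simp [Fin.val_succ]]
  exact thrVal_succ a i

lemma thresholdVal_succ_succ {n : ℕ} (a : Fin (n+1) → ℤ) (i j : Fin (n+1)) (hij : i ≠ j) :
    thresholdVal a i.succ j.succ = thresholdVal (Fin.tail a) i j := by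
  have hi := i.isLt
  have hj := j.isLt
  have hM1 : 1 ≤ max i.val j.val := by
    rcases Nat.eq_zero_or_pos (max i.val j.val) with h | h
    · exact absurd (Fin.ext (show i.val = j.val by omega)) hij
    · exact h
  simp only [thresholdVal, Fin.val_succ]
  rw [show max (i.val+1) (j.val+1) = max i.val j.val + 1 by omega]
  rw [thrVal, thrVal, dif_pos ⟨by omega, by omega⟩, dif_pos ⟨by omega, by omega⟩]
  show a _ = Fin.tail a _
  rw [Fin.tail]
  exact congrArg a (Fin.ext (by simp [Fin.val_succ]; omega))

lemma thresholdVal_succ_eq_or {n : ℕ} (a : Fin (n+1) → ℤ) (i j : Fin (n+1)) :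
    thresholdVal a i.succ j.succ = a i ∨ thresholdVal a i.succ j.succ = a j := by
  rcases le_total i.val j.val with h | h
  · right
    simp only [thresholdVal, Fin.val_succ]
    rw [show max (i.val+1) (j.val+1) = j.val + 1 by omega]
    exact thrVal_succ a j
  · left
    simp only [thresholdVal, Fin.val_succ]
    rw [show max (i.val+1) (j.val+1) = i.val + 1 by omega]
    exact thrVal_succ a i

/-! #### sCount -/

def sCount {n : ℕ} (a : Fin n → ℤ) (j : Fin (n + 1)) : ℕ :=
  (Finset.univ.filter fun i : Fin n => (j : ℕ) ≤ (i : ℕ) ∧ a i = 1).card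

lemma sCount_le {n : ℕ} (a : Fin n → ℤ) (j : Fin (n+1)) : sCount a j ≤ n := by
  rw [sCount]
  calc _ ≤ (Finset.univ : Finset (Fin n)).card := Finset.card_filter_le _ _
  _ = n := by simp

lemma sCount_antitone {n : ℕ} (a : Fin n → ℤ) : Antitone (sCount a) := by
  intro j j' hle
  apply Finset.card_le_card
  intro i hi
  simp only [Finset.mem_filter, Finset.mem_univ, true_and] at hi ⊢
  have : (j : ℕ) ≤ (j' : ℕ) := hle
  exact ⟨le_trans this hi.1, hi.2⟩

lemma sCount_zero {n : ℕ} (a : Fin n → ℤ) :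
    sCount a 0 = ((Finset.univ.filter fun i : Fin n => a i = 1)).card := by
  rw [sCount]
  congr 1
  apply Finset.filter_congr
  intro i _
  simp

lemma sCount_succ_tail {n : ℕ} (a : Fin (n+1) → ℤ) (j : Fin (n+1)) :
    sCount a j.succ = sCount (Fin.tail a) j := by
  rw [sCount, sCount]
  rw [show (Finset.univ.filter fun i : Fin (n+1) => ((j.succ : Fin (n+2)) : ℕ) ≤ (i : ℕ) ∧ a i = 1)
      = (Finset.univ.filter fun i : Fin n => (j : ℕ) ≤ (i : ℕ) ∧ Fin.tail a i = 1).image Fin.succ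
      from ?_]
  · exact Finset.card_image_of_injective _ (Fin.succ_injective _)
  · ext i
    simp only [Finset.mem_filter, Finset.mem_image, Finset.mem_univ, true_and, Fin.val_succ]
    constructor
    · intro hh
      cases i using Fin.cases with
      | zero => simp at hh
      | succ i' =>
        refine ⟨i', ⟨?_, hh.2⟩, rfl⟩
        have := hh.1
        simp only [Fin.val_succ] at this ⊢
        omega
    · rintro ⟨i', ⟨h1, h2⟩, rfl⟩
      exact ⟨by simp only [Fin.val_succ]; omega, h2⟩

lemma sCount_step {n : ℕ} (a : Fin n → ℤ) (i : Fin n) :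
    sCount a i.castSucc = sCount a i.succ + (if a i = 1 then 1 else 0) := by
  rw [sCount, sCount]
  have hsplit : (Finset.univ.filter fun i' : Fin n => ((i.castSucc : Fin (n+1)) : ℕ) ≤ (i' : ℕ) ∧ a i' = 1)
      = (Finset.univ.filter fun i' : Fin n => ((i.succ : Fin (n+1)) : ℕ) ≤ (i' : ℕ) ∧ a i' = 1)
        ∪ (Finset.univ.filter fun i' : Fin n => i' = i ∧ a i' = 1) := by
    ext i'
    simp only [Finset.mem_filter, Finset.mem_union, Finset.mem_univ, true_and,
      Fin.coe_castSucc, Fin.val_succ]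
    constructor
    · rintro ⟨h1, h2⟩
      by_cases he : i' = i
      · exact Or.inr ⟨he, h2⟩
      · have : (i : ℕ) ≠ (i' : ℕ) := fun hh => he (Fin.ext hh.symm)
        exact Or.inl ⟨by omega, h2⟩
    · rintro (⟨h1, h2⟩ | ⟨rfl, h2⟩)
      · exact ⟨by omega, h2⟩
      · exact ⟨le_refl _, h2⟩
  rw [hsplit, Finset.card_union_of_disjoint]
  · congr 1
    split_ifs with h
    · rw [show (Finset.univ.filter fun i' : Fin n => i' = i ∧ a i' = 1) = {i} from ?_]
      · exact Finset.card_singleton i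
      · ext i'
        simp only [Finset.mem_filter, Finset.mem_univ, true_and, Finset.mem_singleton]
        constructor
        · exact fun hh => hh.1
        · rintro rfl; exact ⟨rfl, h⟩
    · rw [show (Finset.univ.filter fun i' : Fin n => i' = i ∧ a i' = 1) = ∅ from ?_]
      · simp
      · ext i'
        simp only [Finset.mem_filter, Finset.mem_univ, true_and, Finset.notMem_empty, iff_false]
        rintro ⟨rfl, h2⟩
        exact h h2
  · rw [Finset.disjoint_left]
    intro x hx hx'
    simp only [Finset.mem_filter, Finset.mem_univ, true_and, Fin.val_succ] at hx hx'
    obtain ⟨rfl, -⟩ := hx'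
    omega

lemma lemmaA : ∀ (n : ℕ) (a : Fin n → ℤ) (C : Finset ℤ),
    (∀ i, a i = 0 ∨ a i = 1 ∨ (a i = -1 ∧ ∀ x ∈ C, -x ∉ C)) →
    properCount (thresholdGraph a) (thresholdSign a) C
      = ∏ j : Fin (n + 1), (C.card - sCount a j) := by
  intro n
  induction n with
  | zero =>
    intro a C _
    rw [properCount_eq]
    have he : properFinset (thresholdGraph a) (thresholdSign a) C
        = Fintype.piFinset fun _ => C := by
      rw [properFinset, Finset.filter_true_of_mem]
      intro κ _ v w hvw
      exact absurd (Fin.ext (by omega)) hvw.1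
    rw [he, Fintype.card_piFinset]
    simp [sCount]
  | succ n ih =>
    intro a C hA
    classical
    set ta := Fin.tail a with hta
    have htaH : ∀ i, ta i = 0 ∨ ta i = 1 ∨ (ta i = -1 ∧ ∀ x ∈ C, -x ∉ C) := fun i => hA i.succ
    have hvalS : ∀ i j : Fin (n+1), i ≠ j →
        thresholdVal a i.succ j.succ = thresholdVal ta i j :=
      fun i j hij => thresholdVal_succ_succ a i j hij
    have hAdjS : ∀ i j : Fin (n+1),
        (thresholdGraph a).Adj i.succ j.succ ↔ (thresholdGraph ta).Adj i j := by
      intro i j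
      constructor
      · rintro ⟨hne, hv⟩
        have hij : i ≠ j := fun h => hne (by rw [h])
        exact ⟨hij, by rwa [hvalS i j hij] at hv⟩
      · rintro ⟨hij, hv⟩
        exact ⟨fun h => hij (Fin.succ_injective _ h), by rwa [hvalS i j hij]⟩
    rw [properCount_eq]
    set F := properFinset (thresholdGraph a) (thresholdSign a) C with hF
    set B := properFinset (thresholdGraph ta) (thresholdSign ta) C with hB
    have hmap : ∀ κ ∈ F, Fin.tail κ ∈ B := by
      intro κ hκ
      rw [hF, properFinset, Finset.mem_filter, Fintype.mem_piFinset] at hκ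
      rw [hB, properFinset, Finset.mem_filter, Fintype.mem_piFinset]
      refine ⟨fun i => hκ.1 i.succ, ?_⟩
      intro v w hvw
      have hcon := hκ.2 v.succ w.succ ((hAdjS v w).mpr hvw)
      rw [thresholdSign_mk, hvalS v w hvw.1] at hcon
      rw [thresholdSign_mk]
      exact hcon
    have hfiber : ∀ κt ∈ B, (F.filter fun κ => Fin.tail κ = κt).card = C.card - sCount a 0 := by
      intro κt hκt
      rw [hB, properFinset, Finset.mem_filter, Fintype.mem_piFinset] at hκt
      obtain ⟨hκtC, hκtP⟩ := hκt
      set forb := ((Finset.univ.filter fun i : Fin (n+1) => a i = 1).image κt) with hforb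
      have hforbC : forb ⊆ C := by
        intro x hx
        rw [hforb] at hx
        obtain ⟨i, -, rfl⟩ := Finset.mem_image.mp hx
        exact hκtC i
      have hinj : Set.InjOn κt (Finset.univ.filter fun i : Fin (n+1) => a i = 1) := by
        intro i hi j hj heq
        by_contra hne
        simp only [Finset.coe_filter, Set.mem_setOf_eq] at hi hj
        have hne' : i ≠ j := fun h => hne h
        have hsgn : thresholdVal ta i j = 1 := by
          rw [← hvalS i j hne']
          rcases thresholdVal_succ_eq_or a i j with h | h
          · rw [h, hi.2]
          · rw [h, hj.2]
        have hadj : (thresholdGraph ta).Adj i j := ⟨hne', by rw [hsgn]; exact one_ne_zero⟩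
        have := hκtP i j hadj
        rw [thresholdSign_mk, hsgn, one_mul] at this
        exact this heq
      have hforbcard : forb.card = sCount a 0 := by
        rw [hforb, Finset.card_image_of_injOn hinj, sCount_zero]
      have hset : F.filter (fun κ => Fin.tail κ = κt)
          = (C \ forb).image fun x => Fin.cons x κt := by
        ext κ
        simp only [Finset.mem_filter, Finset.mem_image, Finset.mem_sdiff]
        constructor
        · rintro ⟨hκF, htl⟩
          refine ⟨κ 0, ⟨?_, ?_⟩, ?_⟩
          · rw [hF, properFinset, Finset.mem_filter, Fintype.mem_piFinset] at hκF
            exact hκF.1 0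
          · intro hmem
            rw [hforb] at hmem
            obtain ⟨i, hi, hix⟩ := Finset.mem_image.mp hmem
            have hai : a i = 1 := (Finset.mem_filter.mp hi).2
            rw [hF, properFinset, Finset.mem_filter] at hκF
            have hadj : (thresholdGraph a).Adj 0 i.succ :=
              ⟨(Fin.succ_ne_zero i).symm, by rw [thresholdVal_zero_succ, hai]; exact one_ne_zero⟩
            have hcon := hκF.2 0 i.succ hadj
            rw [thresholdSign_mk, thresholdVal_zero_succ, hai, one_mul] at hcon
            apply hcon
            rw [← htl] at hix
            exact hix.symm
          · rw [← htl]
            exact Fin.cons_self_tail κ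
        · rintro ⟨x, ⟨hxC, hxforb⟩, rfl⟩
          refine ⟨?_, by funext i; simp [Fin.tail]⟩
          rw [hF, properFinset, Finset.mem_filter, Fintype.mem_piFinset]
          constructor
          · intro v
            cases v using Fin.cases with
            | zero => simpa using hxC
            | succ i => simpa using hκtC i
          · intro v w hvw
            cases v using Fin.cases with
            | zero =>
              cases w using Fin.cases with
              | zero => exact absurd rfl hvw.1
              | succ j =>
                rw [thresholdSign_mk, thresholdVal_zero_succ, Fin.cons_zero, Fin.cons_succ]
                rcases hA j with h0 | h1 | ⟨hm, hvac⟩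
                · exact absurd (by rw [thresholdVal_zero_succ, h0]) hvw.2
                · rw [h1, one_mul]
                  intro heq
                  apply hxforb
                  rw [hforb]
                  exact Finset.mem_image.mpr
                    ⟨j, Finset.mem_filter.mpr ⟨Finset.mem_univ _, h1⟩, heq.symm⟩
                · rw [hm]
                  intro heq
                  have hnc : -(κt j) ∉ C := hvac (κt j) (hκtC j)
                  apply hnc
                  rw [show -(κt j) = x by omega]
                  exact hxC
            | succ i =>
              cases w using Fin.cases with
              | zero =>
                have hvv : thresholdVal a i.succ 0 = a i := by
                  rw [thresholdVal_comm]; exact thresholdVal_zero_succ a i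
                rw [thresholdSign_mk, hvv, Fin.cons_zero, Fin.cons_succ]
                rcases hA i with h0 | h1 | ⟨hm, hvac⟩
                · exact absurd (by rw [hvv, h0]) hvw.2
                · rw [h1, one_mul]
                  intro heq
                  apply hxforb
                  rw [hforb]
                  exact Finset.mem_image.mpr
                    ⟨i, Finset.mem_filter.mpr ⟨Finset.mem_univ _, h1⟩, heq⟩
                · rw [hm]
                  intro heq
                  have hnc : -x ∉ C := hvac x hxC
                  apply hnc
                  rw [show -x = κt i by omega]
                  exact hκtC i
              | succ j =>
                have hij : i ≠ j := fun h => hvw.1 (by rw [h])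
                rw [thresholdSign_mk, Fin.cons_succ, Fin.cons_succ, hvalS i j hij]
                have hcon := hκtP i j ((hAdjS i j).mp hvw)
                rwa [thresholdSign_mk] at hcon
      rw [hset, Finset.card_image_of_injective _ (fun x y hxy => by
        have := congrFun hxy 0
        simpa using this), Finset.card_sdiff_of_subset hforbC, hforbcard]
    have hBcard : B.card = ∏ j : Fin (n+1), (C.card - sCount ta j) := by
      rw [hB, ← properCount_eq]
      exact ih ta C htaH
    rw [Finset.card_eq_sum_card_fiberwise hmap, Finset.sum_congr rfl hfiber,
      Finset.sum_const, smul_eq_mul, hBcard, mul_comm]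
    rw [show (∏ j : Fin (n+1+1), (C.card - sCount a j))
        = (C.card - sCount a 0) * ∏ j : Fin (n+1), (C.card - sCount a j.succ) from
      Fin.prod_univ_succ _]
    congr 1
    exact Finset.prod_congr rfl fun j _ => by rw [sCount_succ_tail]

/-! #### positive part and the distinguishing colour set -/

def posPart {n : ℕ} (b : Fin n → ℤ) : Fin n → ℤ := fun i => if b i = 1 then 1 else 0

lemma posPart_mem {n : ℕ} (b : Fin n → ℤ) (i : Fin n) :
    posPart b i = 0 ∨ posPart b i = 1 := by
  rw [posPart]; split_ifs <;> simp

lemma posPart_eq_one_iff {n : ℕ} (b : Fin n → ℤ) (i : Fin n) :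
    posPart b i = 1 ↔ b i = 1 := by
  rw [posPart]; split_ifs with h <;> simp [h]

lemma thresholdVal_posPart {n : ℕ} (b : Fin n → ℤ) (v w : Fin (n+1))
    (h : thresholdVal (posPart b) v w ≠ 0) :
    thresholdVal (posPart b) v w = 1 ∧ thresholdVal b v w = 1 := by
  simp only [thresholdVal, thrVal] at h ⊢
  split_ifs at h ⊢ with hk
  · rw [posPart] at h ⊢
    split_ifs at h ⊢ with h1
    · exact ⟨rfl, h1⟩
    · exact absurd rfl h
  · exact absurd rfl h

lemma lemmaC {n : ℕ} (b : Fin n → ℤ) (i₀ : Fin n) (h0 : b i₀ = -1) :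
    properCount (thresholdGraph b) (thresholdSign b)
        (Finset.Icc (1:ℤ) ((n:ℤ)+1) ∪ {-((n:ℤ)+1)})
      < properCount (thresholdGraph (posPart b)) (thresholdSign (posPart b))
        (Finset.Icc (1:ℤ) ((n:ℤ)+1) ∪ {-((n:ℤ)+1)}) := by
  classical
  set C := Finset.Icc (1:ℤ) ((n:ℤ)+1) ∪ {-((n:ℤ)+1)} with hC
  rw [properCount_eq, properCount_eq]
  apply Finset.card_lt_card
  have hsub : properFinset (thresholdGraph b) (thresholdSign b) C
      ⊆ properFinset (thresholdGraph (posPart b)) (thresholdSign (posPart b)) C := by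
    intro κ hκ
    rw [properFinset, Finset.mem_filter] at hκ ⊢
    refine ⟨hκ.1, ?_⟩
    intro v w hvw
    obtain ⟨hps, hbs⟩ := thresholdVal_posPart b v w hvw.2
    have hadj : (thresholdGraph b).Adj v w := ⟨hvw.1, by rw [hbs]; exact one_ne_zero⟩
    have hcon := hκ.2 v w hadj
    rw [thresholdSign_mk, hbs] at hcon
    rw [thresholdSign_mk, hps]
    exact hcon
  rw [Finset.ssubset_iff_of_subset hsub]
  set kk : Fin (n+1) → ℤ := fun v =>
    if v = 0 then ((n:ℤ)+1) else if v = i₀.succ then -((n:ℤ)+1) else (v.val : ℤ) with hkk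
  have hcases : ∀ u : Fin (n+1), (u = 0 ∧ kk u = (n:ℤ)+1)
      ∨ (u = i₀.succ ∧ kk u = -((n:ℤ)+1))
      ∨ (u ≠ 0 ∧ u ≠ i₀.succ ∧ kk u = (u.val : ℤ) ∧ 1 ≤ (u.val : ℤ) ∧ (u.val : ℤ) ≤ (n:ℤ)) := by
    intro u
    by_cases hu0 : u = 0
    · exact Or.inl ⟨hu0, by simp only [hkk]; rw [if_pos hu0]⟩
    · by_cases hui : u = i₀.succ
      · exact Or.inr (Or.inl ⟨hui, by simp only [hkk]; rw [if_neg hu0, if_pos hui]⟩)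
      · have h1 : u.val ≠ 0 := fun h => hu0 (Fin.ext h)
        have h2 := u.isLt
        exact Or.inr (Or.inr ⟨hu0, hui, by simp only [hkk]; rw [if_neg hu0, if_neg hui],
          by omega, by omega⟩)
  have hinj : ∀ v w : Fin (n+1), v ≠ w → kk v ≠ kk w := by
    intro v w hne
    rcases hcases v with ⟨hv, ev⟩ | ⟨hv, ev⟩ | ⟨hv1, hv2, ev, ev1, ev2⟩ <;>
      rcases hcases w with ⟨hw, ew⟩ | ⟨hw, ew⟩ | ⟨hw1, hw2, ew, ew1, ew2⟩
    · exact absurd (hv.trans hw.symm) hne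
    · rw [ev, ew]; omega
    · rw [ev, ew]; omega
    · rw [ev, ew]; omega
    · exact absurd (hv.trans hw.symm) hne
    · rw [ev, ew]; omega
    · rw [ev, ew]; omega
    · rw [ev, ew]; omega
    · rw [ev, ew]
      have : v.val ≠ w.val := fun h => hne (Fin.ext h)
      omega
  refine ⟨kk, ?_, ?_⟩
  · rw [properFinset, Finset.mem_filter, Fintype.mem_piFinset]
    constructor
    · intro v
      rcases hcases v with ⟨-, ev⟩ | ⟨-, ev⟩ | ⟨-, -, ev, ev1, ev2⟩ <;> rw [ev, hC] <;>
        simp only [Finset.mem_union, Finset.mem_Icc, Finset.mem_singleton]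
      · left; omega
      · right; trivial
      · left; omega
    · intro v w hvw
      obtain ⟨hps, -⟩ := thresholdVal_posPart b v w hvw.2
      rw [thresholdSign_mk, hps, one_mul]
      exact hinj v w hvw.1
  · intro hmem
    rw [properFinset, Finset.mem_filter] at hmem
    have hadj : (thresholdGraph b).Adj 0 i₀.succ :=
      ⟨(Fin.succ_ne_zero i₀).symm, by rw [thresholdVal_zero_succ, h0]; norm_num⟩
    have hcon := hmem.2 0 i₀.succ hadj
    rw [thresholdSign_mk, thresholdVal_zero_succ, h0] at hcon
    apply hcon
    rw [show kk 0 = (n:ℤ)+1 from by simp [hkk],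
      show kk i₀.succ = -((n:ℤ)+1) from by simp [hkk, Fin.succ_ne_zero i₀]]
    ring

/-! #### transporting counts along sign-preserving isomorphisms -/

lemma lemmaD {n : ℕ} {G₁ G₂ : SimpleGraph (Fin (n+1))} (σ₁ σ₂ : Sym2 (Fin (n+1)) → ℤ)
    (e : G₁ ≃g G₂) (he : ∀ v w, G₁.Adj v w → σ₂ s(e v, e w) = σ₁ s(v, w)) (C : Finset ℤ) :
    properCount G₁ σ₁ C = properCount G₂ σ₂ C := by
  rw [properCount, properCount]
  have himg : ProperColourings G₂ σ₂ C = (fun κ => κ ∘ ⇑e.symm) '' ProperColourings G₁ σ₁ C := by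
    ext κ
    constructor
    · intro hκ
      refine ⟨κ ∘ ⇑e, ⟨fun v => hκ.1 (e v), ?_⟩, ?_⟩
      · intro v w hvw
        have h2 : G₂.Adj (e v) (e w) := e.map_adj_iff.mpr hvw
        have hcon := hκ.2 (e v) (e w) h2
        rw [he v w hvw] at hcon
        exact hcon
      · funext v
        simp
    · rintro ⟨κ₁, hκ₁, rfl⟩
      refine ⟨fun v => hκ₁.1 (e.symm v), ?_⟩
      intro v w hvw
      have h1 : G₁.Adj (e.symm v) (e.symm w) := e.symm.map_adj_iff.mpr hvw
      have hcon := hκ₁.2 _ _ h1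
      have hsgn : σ₂ s(v, w) = σ₁ s(e.symm v, e.symm w) := by
        have hh := he _ _ h1
        rwa [e.apply_symm_apply, e.apply_symm_apply] at hh
      rw [hsgn]
      exact hcon
  rw [himg, Set.ncard_image_of_injective]
  intro κ κ' hh
  funext v
  have := congrFun hh (e v)
  simpa using this

/-! #### colour sets -/

lemma isColourSet_Icc (m : ℕ) : IsColourSet m m (Finset.Icc (1:ℤ) (m:ℤ)) := by
  refine ⟨∅, Finset.Icc (1:ℤ) (m:ℤ), by simp, ?_, Finset.disjoint_empty_left _, by simp, ?_, ?_,
    Or.inl ⟨by simp, by simp, (Finset.empty_union _).symm⟩⟩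
  · simp only [Finset.mem_Icc]
    omega
  · rw [Int.card_Icc]
    omega
  · intro x hx hx'
    simp only [Finset.mem_Icc] at hx hx'
    omega

lemma isColourSet_special (n : ℕ) :
    IsColourSet (n+2) n (Finset.Icc (1:ℤ) ((n:ℤ)+1) ∪ {-((n:ℤ)+1)}) := by
  refine ⟨{((n:ℤ)+1), -((n:ℤ)+1)}, Finset.Icc (1:ℤ) (n:ℤ), ?_, ?_, ?_, ?_, ?_, ?_,
    Or.inl ⟨⟨1, by omega⟩, ?_, ?_⟩⟩
  · simp only [Finset.mem_insert, Finset.mem_singleton]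
    omega
  · simp only [Finset.mem_Icc]
    omega
  · rw [Finset.disjoint_left]
    intro x hx hx'
    simp only [Finset.mem_insert, Finset.mem_singleton] at hx
    simp only [Finset.mem_Icc] at hx'
    omega
  · intro x hx
    simp only [Finset.mem_insert, Finset.mem_singleton] at hx ⊢
    omega
  · rw [Int.card_Icc]
    omega
  · intro x hx hx'
    simp only [Finset.mem_Icc] at hx hx'
    omega
  · rw [Finset.card_insert_of_notMem (by simp only [Finset.mem_singleton]; omega),
      Finset.card_singleton]
    omega
  · ext x
    simp only [Finset.mem_union, Finset.mem_Icc, Finset.mem_singleton, Finset.mem_insert]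
    omega

/-! #### the main reconstruction lemma -/

lemma mainE {n : ℕ} (a b : Fin n → ℤ)
    (ha : (∀ i, a i = 0 ∨ a i = 1) ∨ (∀ i, a i = -1 ∨ a i = 1))
    (hb : (∀ i, b i = 0 ∨ b i = 1) ∨ (∀ i, b i = -1 ∨ b i = 1))
    (h : ∀ lam mu : ℕ, mu ≤ lam → Even (lam - mu) → ∀ C : Finset ℤ,
        IsColourSet lam mu C →
          properCount (thresholdGraph a) (thresholdSign a) C =
            properCount (thresholdGraph b) (thresholdSign b) C) :
    a = b := by
  classical
  have haR : ∀ i, a i = -1 ∨ a i = 0 ∨ a i = 1 := by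
    intro i
    rcases ha with h' | h' <;> rcases h' i with h'' | h'' <;> simp [h'']
  have hbR : ∀ i, b i = -1 ∨ b i = 0 ∨ b i = 1 := by
    intro i
    rcases hb with h' | h' <;> rcases h' i with h'' | h'' <;> simp [h'']
  -- vacuity condition for Icc colour sets
  have hvacIcc : ∀ m : ℕ, ∀ x ∈ Finset.Icc (1:ℤ) (m:ℤ), -x ∉ Finset.Icc (1:ℤ) (m:ℤ) := by
    intro m x hx hx'
    simp only [Finset.mem_Icc] at hx hx'
    omega
  have hAhyp : ∀ (c : Fin n → ℤ), (∀ i, c i = -1 ∨ c i = 0 ∨ c i = 1) → ∀ m : ℕ,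
      (∀ i, c i = 0 ∨ c i = 1 ∨ (c i = -1 ∧ ∀ x ∈ Finset.Icc (1:ℤ) (m:ℤ),
        -x ∉ Finset.Icc (1:ℤ) (m:ℤ))) := by
    intro c hc m i
    rcases hc i with h' | h' | h'
    · exact Or.inr (Or.inr ⟨h', hvacIcc m⟩)
    · exact Or.inl h'
    · exact Or.inr (Or.inl h')
  have hcardIcc : ∀ m : ℕ, (Finset.Icc (1:ℤ) (m:ℤ)).card = m := by
    intro m
    rw [Int.card_Icc]
    omega
  -- step 1 : products agree
  have hprod : ∀ m : ℕ, (∏ j : Fin (n+1), (m - sCount a j)) = ∏ j : Fin (n+1), (m - sCount b j) := by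
    intro m
    have hc := h m m le_rfl (by simp) _ (isColourSet_Icc m)
    have hca := lemmaA n a _ (hAhyp a haR m)
    have hcb := lemmaA n b _ (hAhyp b hbR m)
    rw [hca, hcb, hcardIcc m] at hc
    exact hc
  -- step 2 : cast to ℤ and use polynomial argument
  have hprodZ : ∀ m : ℕ, n ≤ m →
      (∏ j : Fin (n+1), ((m:ℤ) - sCount a j)) = ∏ j : Fin (n+1), ((m:ℤ) - sCount b j) := by
    intro m hm
    have := hprod m
    have hcast : ∀ (c : Fin n → ℤ), ((∏ j : Fin (n+1), (m - sCount c j) : ℕ) : ℤ)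
        = ∏ j : Fin (n+1), ((m:ℤ) - sCount c j) := by
      intro c
      rw [Nat.cast_prod]
      apply Finset.prod_congr rfl
      intro j _
      have := sCount_le c j
      omega
    rw [← hcast a, ← hcast b, this]
  have hS : sCount a = sCount b :=
    aux_sorted (n+1) (sCount a) (sCount b) (sCount_antitone a) (sCount_antitone b)
      (aux_poly_eq _ _ n hprodZ)
  have hiff : ∀ i, a i = 1 ↔ b i = 1 := by
    intro i
    have h1 := congrFun hS i.castSucc
    have h2 := congrFun hS i.succ
    have ea := sCount_step a i
    have eb := sCount_step b i
    by_cases hx : a i = 1 <;> by_cases hy : b i = 1 <;> simp [hx, hy] at ea eb ⊢ <;> omega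
  -- step 3 : conclude
  by_contra hne
  have hex : ∃ i, a i ≠ b i := by
    by_contra h'
    push_neg at h'
    exact hne (funext h')
  obtain ⟨i₀, hi₀⟩ := hex
  have hA1 : a i₀ ≠ 1 := fun h' => hi₀ (by rw [h', ((hiff i₀).mp h').symm])
  have hB1 : b i₀ ≠ 1 := fun h' => hi₀ (by rw [(hiff i₀).mpr h', h'])
  -- the special colour set count equality
  have hspec := h (n+2) n (by omega) ⟨1, by omega⟩ _ (isColourSet_special n)
  have hsC : ∀ (c d : Fin n → ℤ), (∀ i, c i = 1 ↔ d i = 1) → sCount c = sCount d := by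
    intro c d hcd
    funext j
    rw [sCount, sCount]
    congr 1
    apply Finset.filter_congr
    intro i _
    simp only [hcd i]
  have hvac' : ∀ x ∈ Finset.Icc (1:ℤ) ((n:ℤ)+1) ∪ {-((n:ℤ)+1)}, True := fun _ _ => trivial
  -- count of a 0/1 tuple on the special set via lemma A
  have hcount01 : ∀ (c : Fin n → ℤ), (∀ i, c i = 0 ∨ c i = 1) →
      properCount (thresholdGraph c) (thresholdSign c)
        (Finset.Icc (1:ℤ) ((n:ℤ)+1) ∪ {-((n:ℤ)+1)})
      = ∏ j : Fin (n+1), ((Finset.Icc (1:ℤ) ((n:ℤ)+1) ∪ {-((n:ℤ)+1)}).card - sCount c j) :=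
    fun c hc => lemmaA n c _ (fun i => (hc i).imp id Or.inl)
  rcases haR i₀ with ha0 | ha0 | ha0 <;> rcases hbR i₀ with hb0 | hb0 | hb0 <;>
    try (exfalso; omega)
  · -- a i₀ = -1, b i₀ = 0 : a is a ±1 tuple, b is a 0/1 tuple
    have ha' : ∀ i, a i = -1 ∨ a i = 1 := by
      rcases ha with h' | h'
      · rcases h' i₀ with h'' | h'' <;> omega
      · exact h'
    have hb' : ∀ i, b i = 0 ∨ b i = 1 := by
      rcases hb with h' | h'
      · exact h'
      · rcases h' i₀ with h'' | h'' <;> omega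
    have hlt := lemmaC a i₀ ha0
    have heqa : properCount (thresholdGraph (posPart a)) (thresholdSign (posPart a))
        (Finset.Icc (1:ℤ) ((n:ℤ)+1) ∪ {-((n:ℤ)+1)})
        = properCount (thresholdGraph b) (thresholdSign b)
        (Finset.Icc (1:ℤ) ((n:ℤ)+1) ∪ {-((n:ℤ)+1)}) := by
      rw [hcount01 (posPart a) (fun i => (posPart_mem a i)), hcount01 b hb']
      rw [hsC (posPart a) b (fun i => (posPart_eq_one_iff a i).trans (hiff i))]
    omega
  · -- a i₀ = 0, b i₀ = -1 : symmetric
    have hb' : ∀ i, b i = -1 ∨ b i = 1 := by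
      rcases hb with h' | h'
      · rcases h' i₀ with h'' | h'' <;> omega
      · exact h'
    have ha' : ∀ i, a i = 0 ∨ a i = 1 := by
      rcases ha with h' | h'
      · exact h'
      · rcases h' i₀ with h'' | h'' <;> omega
    have hlt := lemmaC b i₀ hb0
    have heqb : properCount (thresholdGraph (posPart b)) (thresholdSign (posPart b))
        (Finset.Icc (1:ℤ) ((n:ℤ)+1) ∪ {-((n:ℤ)+1)})
        = properCount (thresholdGraph a) (thresholdSign a)
        (Finset.Icc (1:ℤ) ((n:ℤ)+1) ∪ {-((n:ℤ)+1)}) := by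
      rw [hcount01 (posPart b) (fun i => (posPart_mem b i)), hcount01 a ha']
      rw [hsC (posPart b) a (fun i => (posPart_eq_one_iff b i).trans (hiff i).symm)]
    omega

end Aux

end SignedPaper


open SignedPaper in
/-- for tuples `a, b ∈ {0,1}ⁿ ∪ {−1,1}ⁿ`, equality of the tuples,
sign-preserving isomorphism of the signed threshold graphs `T_a` and `T_b`, and
equality of all their even bivariate colouring counts are equivalent. -/
theorem stmt_19 (n : ℕ) (a b : Fin n → ℤ)
    (ha : (∀ i, a i = 0 ∨ a i = 1) ∨ (∀ i, a i = -1 ∨ a i = 1))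
    (hb : (∀ i, b i = 0 ∨ b i = 1) ∨ (∀ i, b i = -1 ∨ b i = 1)) :
    ((a = b) ↔ ∃ e : thresholdGraph a ≃g thresholdGraph b,
        ∀ v w : Fin (n + 1), (thresholdGraph a).Adj v w →
          thresholdSign b s(e v, e w) = thresholdSign a s(v, w)) ∧
    ((a = b) ↔ ∀ lam mu : ℕ, mu ≤ lam → Even (lam - mu) → ∀ C : Finset ℤ,
        IsColourSet lam mu C →
          properCount (thresholdGraph a) (thresholdSign a) C =
            properCount (thresholdGraph b) (thresholdSign b) C) := by
  constructor
  · constructor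
    · rintro rfl
      exact ⟨(RelIso.refl _ : thresholdGraph a ≃g thresholdGraph a), fun v w _ => rfl⟩
    · rintro ⟨e, he⟩
      apply mainE a b ha hb
      intro lam mu _ _ C _
      exact lemmaD (thresholdSign a) (thresholdSign b) e he C
  · constructor
    · rintro rfl
      intro _ _ _ _ _ _
      rfl
    · exact fun h => mainE a b ha hb h
end
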